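/- arXiv:1502.07006 — 9 statements merged into one kernel-verified Lean document; each statement's English description precedes it below -/
import Mathlib

section
/- If two arrow systems satisfy L ⪯ R (i.e., all partial sums of arrows at each site of L are dominated by those of R), then for every positive integer x, the first hitting time of x by the walk R is at most the first hitting time of x by the walk L (where hitting times are taken in the extended naturals, infinity if never hit). -/
open Filter Topology

/-- Number of visits of the walk `X` to site `x` up to and including time `n`. -/
def visits (X : ℕ → ℤ) (n : ℕ) (x : ℤ) : ℕ :=
  ((Finset.range (n + 1)).filter (fun m => X m = x)).card

/-- `E` is an arrow system: each arrow is `+1` or `-1`. -/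
def IsArrow (E : ℤ → ℕ → ℤ) : Prop := ∀ x k, E x k = 1 ∨ E x k = -1

/-- `X` is the walk defined by the arrow system `E`. -/
def IsWalk (E : ℤ → ℕ → ℤ) (X : ℕ → ℤ) : Prop :=
  X 0 = 0 ∧ ∀ n, X (n + 1) = X n + E (X n) (visits X n (X n))

/-- The partial-sum domination order `L ⪯ R` on arrow systems. -/
def Prec (L R : ℤ → ℕ → ℤ) : Prop :=
  ∀ x k, ∑ j ∈ Finset.Icc 1 k, L x j ≤ ∑ j ∈ Finset.Icc 1 k, R x j

/-- `T` is the first hitting time of `x` by the walk `X`. -/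
def FirstHit (X : ℕ → ℤ) (x : ℤ) (T : ℕ) : Prop :=
  X T = x ∧ ∀ m < T, X m ≠ x

/-- `x ≥ 0` is a regeneration point of the walk `X`. -/
def Regen (X : ℕ → ℤ) (x : ℤ) : Prop :=
  0 ≤ x ∧ ∃ T, FirstHit X x T ∧ ∀ n ≥ T, x ≤ X n

namespace ArrowAux

/-- number of departures from `y` strictly before time `n` -/
def deps (X : ℕ → ℤ) (n : ℕ) (y : ℤ) : ℕ :=
  ((Finset.range n).filter (fun t => X t = y)).card

def ups (X : ℕ → ℤ) (n : ℕ) (y : ℤ) : ℕ :=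
  ((Finset.range n).filter (fun t => X t = y ∧ X (t+1) = X t + 1)).card

def downs (X : ℕ → ℤ) (n : ℕ) (y : ℤ) : ℕ :=
  ((Finset.range n).filter (fun t => X t = y ∧ X (t+1) = X t - 1)).card

def plusc (E : ℤ → ℕ → ℤ) (y : ℤ) (j : ℕ) : ℕ :=
  ((Finset.Icc 1 j).filter (fun i => E y i = 1)).card

def minusc (E : ℤ → ℕ → ℤ) (y : ℤ) (j : ℕ) : ℕ :=
  ((Finset.Icc 1 j).filter (fun i => E y i = -1)).card

lemma deps_succ (X : ℕ → ℤ) (n : ℕ) (y : ℤ) :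
    deps X (n+1) y = deps X n y + (if X n = y then 1 else 0) := by
  unfold deps
  rw [Finset.range_add_one, Finset.filter_insert]
  split
  · rw [Finset.card_insert_of_notMem (by simp)]
  · simp

lemma ups_succ (X : ℕ → ℤ) (n : ℕ) (y : ℤ) :
    ups X (n+1) y = ups X n y + (if X n = y ∧ X (n+1) = X n + 1 then 1 else 0) := by
  unfold ups
  rw [Finset.range_add_one, Finset.filter_insert]
  split
  · rw [Finset.card_insert_of_notMem (by simp)]
  · simp

lemma downs_succ (X : ℕ → ℤ) (n : ℕ) (y : ℤ) :
    downs X (n+1) y = downs X n y + (if X n = y ∧ X (n+1) = X n - 1 then 1 else 0) := by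
  unfold downs
  rw [Finset.range_add_one, Finset.filter_insert]
  split
  · rw [Finset.card_insert_of_notMem (by simp)]
  · simp

lemma plusc_succ (E : ℤ → ℕ → ℤ) (y : ℤ) (j : ℕ) :
    plusc E y (j+1) = plusc E y j + (if E y (j+1) = 1 then 1 else 0) := by
  unfold plusc
  rw [← Finset.insert_Icc_right_eq_Icc_add_one (by omega), Finset.filter_insert]
  split
  · rw [Finset.card_insert_of_notMem (by simp)]
  · simp

lemma minusc_succ (E : ℤ → ℕ → ℤ) (y : ℤ) (j : ℕ) :
    minusc E y (j+1) = minusc E y j + (if E y (j+1) = -1 then 1 else 0) := by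
  unfold minusc
  rw [← Finset.insert_Icc_right_eq_Icc_add_one (by omega), Finset.filter_insert]
  split
  · rw [Finset.card_insert_of_notMem (by simp)]
  · simp

lemma visits_eq_deps (X : ℕ → ℤ) (n : ℕ) (x : ℤ) : visits X n x = deps X (n+1) x := rfl

/-- the walk step in terms of `deps` -/
lemma walk_step {E X} (h : IsWalk E X) (n : ℕ) :
    X (n+1) = X n + E (X n) (deps X n (X n) + 1) := by
  have := h.2 n
  rwa [visits_eq_deps, deps_succ, if_pos rfl] at this

lemma plusc_add_minusc {E : ℤ → ℕ → ℤ} (hE : IsArrow E) (y : ℤ) (j : ℕ) :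
    plusc E y j + minusc E y j = j := by
  induction j with
  | zero => simp [plusc, minusc]
  | succ j ih =>
    rw [plusc_succ, minusc_succ]
    rcases hE y (j+1) with h | h <;> simp [h] <;> omega

lemma plusc_sub_minusc {E : ℤ → ℕ → ℤ} (hE : IsArrow E) (y : ℤ) (j : ℕ) :
    (plusc E y j : ℤ) - minusc E y j = ∑ i ∈ Finset.Icc 1 j, E y i := by
  induction j with
  | zero => simp [plusc, minusc]
  | succ j ih =>
    rw [plusc_succ, minusc_succ, Finset.sum_Icc_succ_top (by omega)]
    rcases hE y (j+1) with h | h <;> simp [h] <;> omega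

lemma minusc_mono (E : ℤ → ℕ → ℤ) (y : ℤ) {j j' : ℕ} (h : j ≤ j') :
    minusc E y j ≤ minusc E y j' := by
  apply Finset.card_le_card
  apply Finset.filter_subset_filter
  exact Finset.Icc_subset_Icc_right h

lemma minusc_dom {L R : ℤ → ℕ → ℤ} (hL : IsArrow L) (hR : IsArrow R) (hLR : Prec L R)
    (y : ℤ) (j : ℕ) : minusc R y j ≤ minusc L y j := by
  have h1 := plusc_add_minusc hL y j
  have h2 := plusc_add_minusc hR y j
  have h3 := plusc_sub_minusc hL y j
  have h4 := plusc_sub_minusc hR y j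
  have h5 := hLR y j
  omega

lemma plusc_dom {L R : ℤ → ℕ → ℤ} (hL : IsArrow L) (hR : IsArrow R) (hLR : Prec L R)
    (y : ℤ) (j : ℕ) : plusc L y j ≤ plusc R y j := by
  have h1 := plusc_add_minusc hL y j
  have h2 := plusc_add_minusc hR y j
  have h3 := plusc_sub_minusc hL y j
  have h4 := plusc_sub_minusc hR y j
  have h5 := hLR y j
  omega

/-- ups equals plus-count at current departure number -/
lemma ups_eq {E X} (hE : IsArrow E) (hW : IsWalk E X) (n : ℕ) (y : ℤ) :
    ups X n y = plusc E y (deps X n y) := by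
  induction n with
  | zero => simp [ups, deps, plusc]
  | succ n ih =>
    rw [ups_succ, deps_succ]
    by_cases hy : X n = y
    · have hstep := walk_step hW n
      rw [hy] at hstep ⊢
      rw [if_pos rfl, plusc_succ]
      rcases hE y (deps X n y + 1) with h | h <;> rw [h] at hstep
      · rw [if_pos ⟨rfl, hstep⟩, if_pos h, ih]
      · rw [if_neg (by rw [hstep]; intro hc; omega), if_neg (by omega), ih]
    · rw [if_neg (by tauto), if_neg hy]; simpa using ih

lemma downs_eq {E X} (hE : IsArrow E) (hW : IsWalk E X) (n : ℕ) (y : ℤ) :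
    downs X n y = minusc E y (deps X n y) := by
  induction n with
  | zero => simp [downs, deps, minusc]
  | succ n ih =>
    rw [downs_succ, deps_succ]
    by_cases hy : X n = y
    · have hstep := walk_step hW n
      rw [hy] at hstep ⊢
      rw [if_pos rfl, minusc_succ]
      rcases hE y (deps X n y + 1) with h | h <;> rw [h] at hstep
      · rw [if_neg (by rw [hstep]; intro hc; omega), if_neg (by omega), ih]
      · rw [if_pos ⟨rfl, hstep⟩, if_pos h, ih]
    · rw [if_neg (by tauto), if_neg hy]; simpa using ih

/-- edge-crossing identity -/
lemma crossing {E X} (hE : IsArrow E) (hW : IsWalk E X) (n : ℕ) (y : ℤ) :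
    (ups X n y : ℤ) - downs X n (y+1)
      = (if y < X n then 1 else 0) - (if y < 0 then 1 else 0) := by
  induction n with
  | zero => simp [ups, downs, hW.1]
  | succ n ih =>
    have hstep := walk_step hW n
    rcases hE (X n) (deps X n (X n) + 1) with h | h <;> rw [h] at hstep <;>
      rw [ups_succ, downs_succ] <;> push_cast <;>
      split_ifs at ih ⊢ <;> omega

/-- discrete IVT -/
lemma ivt {E X} (hE : IsArrow E) (hW : IsWalk E X) {x : ℤ} (hx : 0 < x) :
    ∀ m : ℕ, x ≤ X m → ∃ t ≤ m, X t = x := by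
  intro m
  induction m with
  | zero => rw [hW.1]; omega
  | succ m ih =>
    intro hm
    by_cases h : x ≤ X m
    · obtain ⟨t, ht, hxt⟩ := ih h
      exact ⟨t, by omega, hxt⟩
    · have hstep := walk_step hW m
      rcases hE (X m) (deps X m (X m) + 1) with h1 | h1 <;> rw [h1] at hstep <;>
        exact ⟨m+1, le_refl _, by omega⟩

/-- total time is the sum of departures -/
lemma le_of_deps_le {XR XL : ℕ → ℤ} {m T : ℕ}
    (h : ∀ y, deps XR m y ≤ deps XL T y) : m ≤ T := by
  classical
  set s : Finset ℤ := (Finset.range m).image XR with hs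
  have h1 : m = ∑ y ∈ s, deps XR m y := by
    simpa [deps] using
      Finset.card_eq_sum_card_fiberwise (f := XR) (s := Finset.range m) (t := s)
        (fun t ht => Finset.mem_image_of_mem _ ht)
  have h2 : ∑ y ∈ s, deps XL T y ≤ T := by
    have h3 : ∑ y ∈ s, deps XL T y
        = ((Finset.range T).filter (fun t => XL t ∈ s)).card := by
      rw [Finset.card_eq_sum_card_fiberwise
        (f := XL) (s := (Finset.range T).filter (fun t => XL t ∈ s)) (t := s)
        (fun t ht => (Finset.mem_filter.1 ht).2)]
      apply Finset.sum_congr rfl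
      intro y hy
      unfold deps
      congr 1
      rw [Finset.filter_filter]
      exact Finset.filter_congr fun t _ =>
        ⟨fun h' => ⟨by rw [h']; exact hy, h'⟩, fun h' => h'.2⟩
    calc ∑ y ∈ s, deps XL T y
        = ((Finset.range T).filter (fun t => XL t ∈ s)).card := h3
      _ ≤ (Finset.range T).card := Finset.card_le_card (Finset.filter_subset _ _)
      _ = T := Finset.card_range T
  calc m = ∑ y ∈ s, deps XR m y := h1
    _ ≤ ∑ y ∈ s, deps XL T y := Finset.sum_le_sum (fun y _ => h y)
    _ ≤ T := h2

/-- Main lemma: if the L-walk is at `x > 0` at time `T`, the R-walk hits `x` by time `T`. -/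
lemma main {L R : ℤ → ℕ → ℤ} (hL : IsArrow L) (hR : IsArrow R) (hLR : Prec L R)
    {XL XR : ℕ → ℤ} (hXL : IsWalk L XL) (hXR : IsWalk R XR)
    {x : ℤ} (hx : 0 < x) {T : ℕ} (hT : XL T = x) :
    ∃ t ≤ T, XR t = x := by
  classical
  set M : Set ℕ := {m | ∀ y, deps XR m y ≤ deps XL T y} with hM
  have h0 : 0 ∈ M := by intro y; simp [deps]
  have hbdd : BddAbove M := ⟨T, fun m hm => le_of_deps_le hm⟩
  set m : ℕ := sSup M with hm
  have hmM : m ∈ M := Nat.sSup_mem ⟨0, h0⟩ hbdd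
  have hmT : m ≤ T := le_of_deps_le hmM
  have hnot : m + 1 ∉ M := fun h => by
    have := le_csSup hbdd h; omega
  -- the violating site is y* = XR m, with equality of departure counts
  set y : ℤ := XR m with hy
  have hkey : deps XR m y = deps XL T y := by
    by_contra hne
    have hlt : deps XR m y < deps XL T y := lt_of_le_of_ne (hmM y) hne
    apply hnot
    intro z
    rw [deps_succ]
    by_cases hz : XR m = z
    · rw [if_pos hz, ← hz]
      have h2 : deps XR m (XR m) < deps XL T (XR m) := by rw [← hy]; exact hlt
      omega
    · rw [if_neg hz]; simpa using hmM z
  -- compare ups at y and downs at y+1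
  have hU : ups XL T y ≤ ups XR m y := by
    rw [ups_eq hL hXL, ups_eq hR hXR, hkey]
    exact plusc_dom hL hR hLR y _
  have hD : downs XR m (y+1) ≤ downs XL T (y+1) := by
    rw [downs_eq hL hXL, downs_eq hR hXR]
    calc minusc R (y+1) (deps XR m (y+1))
        ≤ minusc L (y+1) (deps XR m (y+1)) := minusc_dom hL hR hLR _ _
      _ ≤ minusc L (y+1) (deps XL T (y+1)) := minusc_mono _ _ (hmM (y+1))
  have hcR := crossing hR hXR m y
  have hcL := crossing hL hXL T y
  rw [hT] at hcL
  rw [← hy, if_neg (lt_irrefl y)] at hcR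
  -- conclude x ≤ y
  have hxy : x ≤ y := by
    by_contra hc
    push_neg at hc
    rw [if_pos hc] at hcL
    have hU' : (ups XL T y : ℤ) ≤ ups XR m y := by exact_mod_cast hU
    have hD' : (downs XR m (y+1) : ℤ) ≤ downs XL T (y+1) := by exact_mod_cast hD
    split_ifs at hcL hcR <;> omega
  obtain ⟨t, ht, hxt⟩ := ivt hR hXR hx m hxy
  exact ⟨t, le_trans ht hmT, hxt⟩

end ArrowAux

/-- If L ⪯ R then for every positive x the first hitting time (in ℕ∞)
of x by the walk R is at most that of the walk L. -/
theorem stmt_0 (L R : ℤ → ℕ → ℤ) (hL : IsArrow L) (hR : IsArrow R) (hLR : Prec L R)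
    (XL XR : ℕ → ℤ) (hXL : IsWalk L XL) (hXR : IsWalk R XR) :
    ∀ x : ℤ, 0 < x →
      sInf ((fun n : ℕ => (n : ℕ∞)) '' {n | XR n = x}) ≤
        sInf ((fun n : ℕ => (n : ℕ∞)) '' {n | XL n = x}) := by
  intro x hx
  apply le_sInf
  rintro b ⟨n, hn, rfl⟩
  obtain ⟨t, ht, hxt⟩ := ArrowAux.main hL hR hLR hXL hXR hx hn
  refine le_trans (sInf_le ⟨t, hxt, rfl⟩) ?_
  simp only []
  exact_mod_cast ht
end

section
/- If two arrow systems satisfy L ⪯ R, then for every n ∈ ℕ, the running maximum of the walk L up to time n is at most the running maximum of the walk R up to time n, i.e., max_{m ≤ n} L_m ≤ max_{m ≤ n} R_m. -/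
open Filter Topology

namespace AS

def wkAux (E : ℤ → ℕ → ℤ) : ℕ → ℤ × (ℤ → ℕ)
  | 0 => (0, fun y => if y = 0 then 1 else 0)
  | n+1 =>
    let s := wkAux E n
    let p := s.1 + E s.1 (s.2 s.1)
    (p, fun y => if y = p then s.2 y + 1 else s.2 y)

def wk (E : ℤ → ℕ → ℤ) (n : ℕ) : ℤ := (wkAux E n).1

lemma visits_succ (X : ℕ → ℤ) (n : ℕ) (y : ℤ) :
    visits X (n+1) y = visits X n y + if X (n+1) = y then 1 else 0 := by
  unfold visits
  rw [Finset.range_add_one, Finset.filter_insert]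
  split
  · rw [Finset.card_insert_of_notMem (by simp)]
  · simp

lemma visits_zero (X : ℕ → ℤ) (y : ℤ) : visits X 0 y = if X 0 = y then 1 else 0 := by
  unfold visits
  simp [Finset.range_one, Finset.filter_singleton]
  split <;> simp

lemma visits_congr {X Y : ℕ → ℤ} {n : ℕ} (h : ∀ m ≤ n, X m = Y m) (y : ℤ) :
    visits X n y = visits Y n y := by
  unfold visits
  congr 1
  apply Finset.filter_congr
  intro m hm
  rw [h m (by simpa [Nat.lt_succ_iff] using Finset.mem_range.mp hm)]

lemma wk_zero (E : ℤ → ℕ → ℤ) : wk E 0 = 0 := rfl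

lemma wkAux_snd (E : ℤ → ℕ → ℤ) (n : ℕ) (y : ℤ) :
    (wkAux E n).2 y = visits (wk E) n y := by
  induction n with
  | zero =>
      rw [visits_zero]
      show (if y = (0:ℤ) then 1 else 0) = _
      rw [wk_zero]
      by_cases h : y = (0:ℤ)
      · rw [if_pos h, if_pos h.symm]
      · rw [if_neg h, if_neg (fun hh => h hh.symm)]
  | succ n ih =>
      rw [visits_succ, ← ih]
      have hpos : wk E (n+1) = (wkAux E n).1 + E (wkAux E n).1 ((wkAux E n).2 (wkAux E n).1) := rfl
      show (if y = (wkAux E n).1 + E (wkAux E n).1 ((wkAux E n).2 (wkAux E n).1) then (wkAux E n).2 y + 1 else (wkAux E n).2 y) = _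
      rw [← hpos]
      by_cases h : wk E (n+1) = y
      · rw [if_pos h.symm, if_pos h]
      · rw [if_neg (fun hh => h hh.symm), if_neg h, Nat.add_zero]

lemma wk_succ (E : ℤ → ℕ → ℤ) (n : ℕ) :
    wk E (n+1) = wk E n + E (wk E n) (visits (wk E) n (wk E n)) := by
  show (wkAux E (n+1)).1 = _
  rw [← wkAux_snd]
  rfl

lemma isWalk_wk (E : ℤ → ℕ → ℤ) : IsWalk E (wk E) := ⟨rfl, wk_succ E⟩

lemma walk_unique {E : ℤ → ℕ → ℤ} {X : ℕ → ℤ} (h : IsWalk E X) : ∀ n, X n = wk E n := by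
  intro n
  induction n using Nat.strong_induction_on with
  | _ n ih =>
    match n with
    | 0 => exact h.1
    | n+1 =>
      rw [h.2 n, wk_succ, ih n (by omega),
        visits_congr (fun m hm => ih m (by omega)) (wk E n)]


lemma visits_mono (X : ℕ → ℤ) {a b : ℕ} (h : a ≤ b) (y : ℤ) :
    visits X a y ≤ visits X b y := by
  unfold visits
  apply Finset.card_le_card
  apply Finset.filter_subset_filter
  exact Finset.range_subset_range.mpr (by omega)

lemma visits_pos_self (X : ℕ → ℤ) (n : ℕ) : 1 ≤ visits X n (X n) :=
  Finset.card_pos.mpr ⟨n, by simp⟩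

lemma visits_le (X : ℕ → ℤ) (n : ℕ) (y : ℤ) : visits X n y ≤ n + 1 :=
  le_trans (Finset.card_le_card (Finset.filter_subset _ _)) (by simp)

/-- count of visits in the interval `Ioc a b`. -/
def cnt (X : ℕ → ℤ) (a b : ℕ) (y : ℤ) : ℕ :=
  ((Finset.Ioc a b).filter (fun s => X s = y)).card

lemma visits_add (X : ℕ → ℤ) {a b : ℕ} (h : a ≤ b) (y : ℤ) :
    visits X b y = visits X a y + cnt X a b y := by
  unfold visits cnt
  rw [← Finset.card_union_of_disjoint, ← Finset.filter_union]
  · congr 2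
    ext s
    simp only [Finset.mem_union, Finset.mem_range, Finset.mem_Ioc]
    omega
  · apply Finset.disjoint_filter_filter
    rw [Finset.disjoint_left]
    intro s hs hs'
    simp only [Finset.mem_range] at hs
    simp only [Finset.mem_Ioc] at hs'
    omega

lemma cnt_eq_zero {X : ℕ → ℤ} {a b : ℕ} {y : ℤ} (h : ∀ s, a < s → s ≤ b → X s ≠ y) :
    cnt X a b y = 0 := by
  unfold cnt
  rw [Finset.card_eq_zero, Finset.filter_eq_empty_iff]
  intro s hs
  simp only [Finset.mem_Ioc] at hs
  exact h s hs.1 hs.2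

lemma cnt_eq_one {X : ℕ → ℤ} {a b c : ℕ} {y : ℤ} (hc : a < c) (hc' : c ≤ b) (hcy : X c = y)
    (h : ∀ s, a < s → s ≤ b → s ≠ c → X s ≠ y) : cnt X a b y = 1 := by
  unfold cnt
  rw [Finset.card_eq_one]
  refine ⟨c, ?_⟩
  ext s
  simp only [Finset.mem_filter, Finset.mem_Ioc, Finset.mem_singleton]
  constructor
  · rintro ⟨⟨h1, h2⟩, h3⟩
    by_contra hne
    exact h s h1 h2 hne h3
  · rintro rfl; exact ⟨⟨hc, hc'⟩, hcy⟩

/-- shift bijection for counts -/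
lemma cnt_shift {X Y : ℕ → ℤ} {a b : ℕ} (L : ℕ) {y : ℤ}
    (h : ∀ i, i < L → X (a + 1 + i) = Y (b + 1 + i)) :
    cnt X a (a + L) y = cnt Y b (b + L) y := by
  unfold cnt
  apply Finset.card_bij' (fun s _ => s - a + b) (fun s _ => s - b + a)
  · intro s hs
    simp only [Finset.mem_filter, Finset.mem_Ioc] at hs ⊢
    refine ⟨⟨by omega, by omega⟩, ?_⟩
    have := h (s - a - 1) (by omega)
    rw [show a + 1 + (s - a - 1) = s by omega, show b + 1 + (s - a - 1) = s - a + b by omega] at this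
    rw [← this]; exact hs.2
  · intro s hs
    simp only [Finset.mem_filter, Finset.mem_Ioc] at hs ⊢
    refine ⟨⟨by omega, by omega⟩, ?_⟩
    have := h (s - b - 1) (by omega)
    rw [show a + 1 + (s - b - 1) = s - b + a by omega, show b + 1 + (s - b - 1) = s by omega] at this
    rw [this]; exact hs.2
  · intro s hs; simp only [Finset.mem_filter, Finset.mem_Ioc] at hs; omega
  · intro s hs; simp only [Finset.mem_filter, Finset.mem_Ioc] at hs; omega

section Arrow
variable {E : ℤ → ℕ → ℤ} (hE : IsArrow E)
include hE

lemma wk_step_le (n : ℕ) : wk E (n+1) ≤ wk E n + 1 := by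
  rw [wk_succ]
  rcases hE (wk E n) (visits (wk E) n (wk E n)) with h | h <;> rw [h] <;> omega

lemma wk_step_ge (n : ℕ) : wk E n - 1 ≤ wk E (n+1) := by
  rw [wk_succ]
  rcases hE (wk E n) (visits (wk E) n (wk E n)) with h | h <;> rw [h] <;> omega

lemma wk_abs_le (n : ℕ) : |wk E n| ≤ (n : ℤ) := by
  induction n with
  | zero => simp [wk_zero]
  | succ n ih =>
      have h1 := wk_step_le hE n
      have h2 := wk_step_ge hE n
      rw [abs_le] at ih ⊢
      push_cast
      omega

end Arrow

/-- Locality: walks agree up to time `n` if the systems agree on the window. -/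
lemma wk_local {E E' : ℤ → ℕ → ℤ} (hE : IsArrow E) {n : ℕ}
    (h : ∀ y j, |y| ≤ (n:ℤ) → 1 ≤ j → j ≤ n → E y j = E' y j) :
    ∀ s ≤ n, wk E s = wk E' s := by
  intro s
  induction s using Nat.strong_induction_on with
  | _ s ih =>
    intro hs
    match s with
    | 0 => rfl
    | s+1 =>
      have hih : ∀ m ≤ s, wk E m = wk E' m := fun m hm => ih m (by omega) (by omega)
      rw [wk_succ, wk_succ, ← hih s le_rfl, ← visits_congr (fun m hm => hih m hm)]
      congr 1
      apply h
      · exact le_trans (wk_abs_le hE s) (by exact_mod_cast Nat.cast_le.mpr (by omega))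
      · exact visits_pos_self _ _
      · exact le_trans (visits_le _ _ _) (by omega)
lemma stays_lt {F : ℤ → ℕ → ℤ} (hF : IsArrow F) {a : ℕ} {c : ℤ} (h1 : wk F (a+1) < c) :
    ∀ i, (∀ j, 0 < j → j ≤ i + 1 → wk F (a + j) ≠ c) → wk F (a + 1 + i) < c := by
  intro i
  induction i with
  | zero => intro _; simpa using h1
  | succ i ih =>
      intro h
      have hp : wk F (a + 1 + i) < c := ih (fun j hj hji => h j hj (by omega))
      have hne : wk F (a + 1 + i + 1) ≠ c := by
        have := h (i + 2) (by omega) (by omega)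
        rwa [show a + (i+2) = a + 1 + i + 1 by omega] at this
      have hle := wk_step_le hF (a + 1 + i)
      rw [show a+1+(i+1) = a+1+i+1 by omega]
      omega

lemma stays_gt {F : ℤ → ℕ → ℤ} (hF : IsArrow F) {a : ℕ} {c : ℤ} (h1 : c < wk F (a+1)) :
    ∀ i, (∀ j, 0 < j → j ≤ i + 1 → wk F (a + j) ≠ c) → c < wk F (a + 1 + i) := by
  intro i
  induction i with
  | zero => intro _; simpa using h1
  | succ i ih =>
      intro h
      have hp : c < wk F (a + 1 + i) := ih (fun j hj hji => h j hj (by omega))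
      have hne : wk F (a + 1 + i + 1) ≠ c := by
        have := h (i + 2) (by omega) (by omega)
        rwa [show a + (i+2) = a + 1 + i + 1 by omega] at this
      have hle := wk_step_ge hF (a + 1 + i)
      rw [show a+1+(i+1) = a+1+i+1 by omega]
      omega

/-- every visit count value `m ∈ [1, visits X s x]` is attained at some visit time. -/
lemma visits_exists (X : ℕ → ℤ) (x : ℤ) :
    ∀ s m, 1 ≤ m → m ≤ visits X s x → ∃ u ≤ s, X u = x ∧ visits X u x = m := by
  intro s
  induction s with
  | zero =>
      intro m h1 h2
      rw [visits_zero] at h2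
      by_cases h : X 0 = x
      · rw [if_pos h] at h2
        exact ⟨0, le_refl 0, h, by rw [visits_zero, if_pos h]; omega⟩
      · rw [if_neg h] at h2; omega
  | succ s ih =>
      intro m h1 h2
      by_cases h : m ≤ visits X s x
      · obtain ⟨u, hu, h3, h4⟩ := ih m h1 h
        exact ⟨u, by omega, h3, h4⟩
      · rw [visits_succ] at h2
        by_cases hx : X (s+1) = x
        · rw [if_pos hx] at h2
          exact ⟨s+1, le_refl _, hx, by rw [visits_succ, if_pos hx]; omega⟩
        · rw [if_neg hx] at h2; omega

section Swap

variable {E E' : ℤ → ℕ → ℤ} {x : ℤ} {k : ℕ}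
variable (hE : IsArrow E) (hE' : IsArrow E')
variable (hk1 : 1 ≤ k)
variable (hxk : E x k = -1) (hxk1 : E x (k+1) = 1)
variable (hxk' : E' x k = 1) (hxk1' : E' x (k+1) = -1)
variable (hagree : ∀ y j, y ≠ x ∨ (j ≠ k ∧ j ≠ k+1) → E y j = E' y j)

/-- walks agree before the k-th visit to x. -/
lemma eq_before (hE : IsArrow E) (hk1 : 1 ≤ k)
    (hagree : ∀ y j, y ≠ x ∨ (j ≠ k ∧ j ≠ k+1) → E y j = E' y j) :
    ∀ s, (∀ u, u < s → ¬(wk E u = x ∧ visits (wk E) u x = k)) → wk E' s = wk E s := by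
  intro s
  induction s using Nat.strong_induction_on with
  | _ s ih =>
    intro hs
    match s with
    | 0 => rfl
    | s+1 =>
      have hih : ∀ u ≤ s, wk E' u = wk E u := fun u hu =>
        ih u (by omega) (fun v hv => hs v (by omega))
      rw [wk_succ, wk_succ, hih s le_rfl, visits_congr (fun m hm => hih m hm)]
      congr 1
      by_cases hp : wk E s = x
      · have hv1 : visits (wk E) s (wk E s) ≠ k := fun hc => hs s (by omega) ⟨hp, by rwa [hp] at hc⟩
        have hv2 : visits (wk E) s (wk E s) ≠ k + 1 := by
          intro hc
          rw [hp] at hc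
          obtain ⟨u, hu, hux, huv⟩ := visits_exists (wk E) x s k hk1 (by omega)
          exact hs u (by omega) ⟨hux, huv⟩
        exact (hagree _ _ (Or.inr ⟨hv1, hv2⟩)).symm
      · exact (hagree _ _ (Or.inl hp)).symm

end Swap
section SwapCore

variable {E E' : ℤ → ℕ → ℤ} {x : ℤ} {k t τ : ℕ}

lemma claimA (hE : IsArrow E) (hE' : IsArrow E') (hk1 : 1 ≤ k)
    (hxk : E x k = -1) (hxk1 : E x (k+1) = 1) (hxk' : E' x k = 1)
    (hagree : ∀ y j, y ≠ x ∨ (j ≠ k ∧ j ≠ k+1) → E y j = E' y j)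
    (ht : wk E t = x) (hvt : visits (wk E) t x = k)
    (htmin : ∀ u, u < t → ¬(wk E u = x ∧ visits (wk E) u x = k))
    (hτgt : t < τ) (hτx : wk E τ = x) (hτmin : ∀ u, t < u → u < τ → wk E u ≠ x) :
    ∀ i, (∀ j, 0 < j → j ≤ i → wk E' (t + j) ≠ x) →
      wk E' (t + 1 + i) = wk E (τ + 1 + i) ∧
      ∀ y, x < y → visits (wk E') (t + 1 + i) y = visits (wk E) (τ + 1 + i) y := by
  have hpre : ∀ u ≤ t, wk E' u = wk E u := fun u hu =>
    eq_before hE hk1 hagree u (fun v hv => htmin v (by omega))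
  have hvist : ∀ y, visits (wk E') t y = visits (wk E) t y := fun y =>
    visits_congr (fun m hm => hpre m hm) y
  have hX't1 : wk E' (t+1) = x + 1 := by
    rw [wk_succ, hpre t le_rfl, ht, hvist x, hvt, hxk']
  have hXt1 : wk E (t+1) = x - 1 := by
    rw [wk_succ, ht, hvt, hxk]; ring
  have hbelow : ∀ u, t < u → u < τ → wk E u < x := by
    intro u hu1 hu2
    have := stays_lt hE (a := t) (c := x) (by omega) (u - t - 1)
      (fun j hj hji => hτmin (t+j) (by omega) (by omega))
    rwa [show t + 1 + (u - t - 1) = u by omega] at this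
  have hvτ : visits (wk E) τ x = k + 1 := by
    rw [visits_add (wk E) (le_of_lt hτgt) x, hvt,
      cnt_eq_one hτgt le_rfl hτx
        (fun s hs1 hs2 hs3 => ne_of_lt (hbelow s hs1 (lt_of_le_of_ne hs2 hs3)))]
  have hXτ1 : wk E (τ+1) = x + 1 := by
    rw [wk_succ, hτx, hvτ, hxk1]
  intro i
  induction i with
  | zero =>
      intro _
      refine ⟨by rw [Nat.add_zero, hX't1, hXτ1], ?_⟩
      intro y hy
      have hz : cnt (wk E) t τ y = 0 := cnt_eq_zero (by
        intro s hs1 hs2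
        rcases eq_or_lt_of_le hs2 with rfl | hlt
        · rw [hτx]; exact ne_of_lt hy
        · intro hc; have := hbelow s hs1 hlt; rw [hc] at this; omega)
      rw [Nat.add_zero, Nat.add_zero, visits_succ, visits_succ, hX't1, hXτ1, hvist y,
        visits_add (wk E) (le_of_lt hτgt) y, hz, Nat.add_zero]
  | succ i ih =>
      intro h
      obtain ⟨hpos, hvis⟩ := ih (fun j hj hji => h j hj (by omega))
      have habove : x < wk E' (t + 1 + i) := by
        have := stays_gt hE' (a := t) (c := x) (by omega) i
          (fun j hj hji => h j hj (by omega))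
        exact this
      have hposs : wk E' (t + 1 + (i+1)) = wk E (τ + 1 + (i+1)) := by
        rw [show t+1+(i+1) = (t+1+i)+1 by omega, show τ+1+(i+1) = (τ+1+i)+1 by omega,
          wk_succ, wk_succ, hpos, ← hvis (wk E (τ+1+i)) (hpos ▸ habove)]
        congr 1
        rw [← hpos]
        exact (hagree _ _ (Or.inl (ne_of_gt habove))).symm
      refine ⟨hposs, ?_⟩
      intro y hy
      rw [show t+1+(i+1) = (t+1+i)+1 by omega, show τ+1+(i+1) = (τ+1+i)+1 by omega] at hposs ⊢
      rw [visits_succ, visits_succ, hvis y hy, hposs]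

end SwapCore
lemma claimB {E E' : ℤ → ℕ → ℤ} {x : ℤ} {k t τ' : ℕ}
    (hE : IsArrow E) (hE' : IsArrow E') (hk1 : 1 ≤ k)
    (hxk : E x k = -1) (hxk' : E' x k = 1) (hxk1' : E' x (k+1) = -1)
    (hagree : ∀ y j, y ≠ x ∨ (j ≠ k ∧ j ≠ k+1) → E y j = E' y j)
    (ht : wk E t = x) (hvt : visits (wk E) t x = k)
    (htmin : ∀ u, u < t → ¬(wk E u = x ∧ visits (wk E) u x = k))
    (hτ'gt : t < τ') (hτ'x : wk E' τ' = x) (hτ'min : ∀ u, t < u → u < τ' → wk E' u ≠ x) :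
    ∀ i, (∀ j, 0 < j → j ≤ i → wk E (t + j) ≠ x) →
      wk E' (τ' + 1 + i) = wk E (t + 1 + i) ∧
      ∀ y, y < x → visits (wk E') (τ' + 1 + i) y = visits (wk E) (t + 1 + i) y := by
  have hpre : ∀ u ≤ t, wk E' u = wk E u := fun u hu =>
    eq_before hE hk1 hagree u (fun v hv => htmin v (by omega))
  have hvist : ∀ y, visits (wk E') t y = visits (wk E) t y := fun y =>
    visits_congr (fun m hm => hpre m hm) y
  have hX't1 : wk E' (t+1) = x + 1 := by
    rw [wk_succ, hpre t le_rfl, ht, hvist x, hvt, hxk']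
  have hXt1 : wk E (t+1) = x - 1 := by
    rw [wk_succ, ht, hvt, hxk]; ring
  have habove : ∀ u, t < u → u < τ' → x < wk E' u := by
    intro u hu1 hu2
    have := stays_gt hE' (a := t) (c := x) (by omega) (u - t - 1)
      (fun j hj hji => hτ'min (t+j) (by omega) (by omega))
    rwa [show t + 1 + (u - t - 1) = u by omega] at this
  have hvτ' : visits (wk E') τ' x = k + 1 := by
    rw [visits_add (wk E') (le_of_lt hτ'gt) x, hvist x, hvt,
      cnt_eq_one hτ'gt le_rfl hτ'x
        (fun s hs1 hs2 hs3 => ne_of_gt (habove s hs1 (lt_of_le_of_ne hs2 hs3)))]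
  have hX'τ'1 : wk E' (τ'+1) = x - 1 := by
    rw [wk_succ, hτ'x, hvτ', hxk1']; ring
  intro i
  induction i with
  | zero =>
      intro _
      refine ⟨by rw [Nat.add_zero, hX'τ'1, hXt1], ?_⟩
      intro y hy
      have hz : cnt (wk E') t τ' y = 0 := cnt_eq_zero (by
        intro s hs1 hs2
        rcases eq_or_lt_of_le hs2 with rfl | hlt
        · rw [hτ'x]; exact ne_of_gt hy
        · intro hc; have := habove s hs1 hlt; rw [hc] at this; omega)
      rw [Nat.add_zero, Nat.add_zero, visits_succ, visits_succ, hX'τ'1, hXt1,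
        visits_add (wk E') (le_of_lt hτ'gt) y, hz, Nat.add_zero, hvist y]
  | succ i ih =>
      intro h
      obtain ⟨hpos, hvis⟩ := ih (fun j hj hji => h j hj (by omega))
      have hbelow2 : wk E (t + 1 + i) < x := by
        have := stays_lt hE (a := t) (c := x) (by omega) i
          (fun j hj hji => h j hj (by omega))
        exact this
      have hposs : wk E' (τ' + 1 + (i+1)) = wk E (t + 1 + (i+1)) := by
        rw [show τ'+1+(i+1) = (τ'+1+i)+1 by omega, show t+1+(i+1) = (t+1+i)+1 by omega,
          wk_succ, wk_succ, hpos, hvis (wk E (t+1+i)) hbelow2]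
        congr 1
        exact (hagree _ _ (Or.inl (ne_of_lt hbelow2))).symm
      refine ⟨hposs, ?_⟩
      intro y hy
      rw [show τ'+1+(i+1) = (τ'+1+i)+1 by omega, show t+1+(i+1) = (t+1+i)+1 by omega] at hposs ⊢
      rw [visits_succ, visits_succ, hvis y hy, hposs]
lemma swap_le {E E' : ℤ → ℕ → ℤ} {x : ℤ} {k : ℕ}
    (hE : IsArrow E) (hE' : IsArrow E') (hk1 : 1 ≤ k)
    (hxk : E x k = -1) (hxk1 : E x (k+1) = 1)
    (hxk' : E' x k = 1) (hxk1' : E' x (k+1) = -1)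
    (hagree : ∀ y j, y ≠ x ∨ (j ≠ k ∧ j ≠ k+1) → E y j = E' y j) :
    ∀ s, ∃ u, u ≤ s ∧ wk E s ≤ wk E' u := by
  by_cases ht : ∃ s, wk E s = x ∧ visits (wk E) s x = k
  swap
  · push_neg at ht
    intro s
    exact ⟨s, le_rfl, le_of_eq (eq_before hE hk1 hagree s
      (fun u _ hc => (ht u hc.1 hc.2).elim)).symm⟩
  · set t := Nat.find ht with htdef
    obtain ⟨htx, hvt⟩ : wk E t = x ∧ visits (wk E) t x = k := Nat.find_spec ht
    have htmin : ∀ u, u < t → ¬(wk E u = x ∧ visits (wk E) u x = k) :=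
      fun u hu => Nat.find_min ht hu
    have hpre : ∀ u ≤ t, wk E' u = wk E u := fun u hu =>
      eq_before hE hk1 hagree u (fun v hv => htmin v (by omega))
    have hvist : ∀ y, visits (wk E') t y = visits (wk E) t y := fun y =>
      visits_congr (fun m hm => hpre m hm) y
    have hX't1 : wk E' (t+1) = x + 1 := by
      rw [wk_succ, hpre t le_rfl, htx, hvist x, hvt, hxk']
    have hXt1 : wk E (t+1) = x - 1 := by
      rw [wk_succ, htx, hvt, hxk]; ring
    intro s
    by_cases hst : s ≤ t
    · exact ⟨s, le_rfl, le_of_eq (hpre s hst).symm⟩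
    push_neg at hst
    by_cases hτe : ∃ u, t < u ∧ wk E u = x
    swap
    · -- X never returns to x : it stays < x
      push_neg at hτe
      have hlt : wk E s < x := by
        have := stays_lt hE (a := t) (c := x) (by omega) (s - t - 1)
          (fun j hj hji => hτe (t + j) (by omega))
        rwa [show t + 1 + (s - t - 1) = s by omega] at this
      exact ⟨t, by omega, by rw [hpre t le_rfl, htx]; omega⟩
    obtain ⟨τ, hτgt, hτx, hτmin⟩ : ∃ τ, t < τ ∧ wk E τ = x ∧ ∀ u, t < u → u < τ → wk E u ≠ x := by
      refine ⟨Nat.find hτe, (Nat.find_spec hτe).1, (Nat.find_spec hτe).2, ?_⟩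
      intro u hu1 hu2 hc
      exact Nat.find_min hτe hu2 ⟨hu1, hc⟩
    have hbelow : ∀ u, t < u → u < τ → wk E u < x := by
      intro u hu1 hu2
      have := stays_lt hE (a := t) (c := x) (by omega) (u - t - 1)
        (fun j hj hji => hτmin (t+j) (by omega) (by omega))
      rwa [show t + 1 + (u - t - 1) = u by omega] at this
    have hτ2 : t + 2 ≤ τ := by
      rcases Nat.lt_or_ge (t+1) τ with h | h
      · omega
      · have : τ = t + 1 := by omega
        rw [this, hXt1] at hτx; omega
    by_cases hsτ : s ≤ τ
    · refine ⟨t, by omega, ?_⟩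
      rw [hpre t le_rfl, htx]
      rcases eq_or_lt_of_le hsτ with rfl | h
      · rw [hτx]
      · have := hbelow s hst h; omega
    push_neg at hsτ
    have hA := claimA hE hE' hk1 hxk hxk1 hxk' hagree htx hvt htmin hτgt hτx hτmin
    by_cases hτ'e : ∃ u, t < u ∧ wk E' u = x
    swap
    · -- X' never returns to x: use claimA forever
      push_neg at hτ'e
      obtain ⟨hApos, -⟩ := hA (s - τ - 1) (fun j hj hji => hτ'e (t + j) (by omega))
      rw [show τ + 1 + (s - τ - 1) = s by omega] at hApos
      exact ⟨t + 1 + (s - τ - 1), by omega, le_of_eq hApos.symm⟩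
    obtain ⟨τ', hτ'gt, hτ'x, hτ'min⟩ : ∃ τ', t < τ' ∧ wk E' τ' = x ∧
        ∀ u, t < u → u < τ' → wk E' u ≠ x := by
      refine ⟨Nat.find hτ'e, (Nat.find_spec hτ'e).1, (Nat.find_spec hτ'e).2, ?_⟩
      intro u hu1 hu2 hc
      exact Nat.find_min hτ'e hu2 ⟨hu1, hc⟩
    have hτ'2 : t + 2 ≤ τ' := by
      rcases Nat.lt_or_ge (t+1) τ' with h | h
      · omega
      · have : τ' = t + 1 := by omega
        rw [this, hX't1] at hτ'x; omega
    set σ := τ + (τ' - t) with hσdef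
    by_cases hsσ : s ≤ σ
    · -- within the A phase
      obtain ⟨hApos, -⟩ := hA (s - τ - 1)
        (fun j hj hji => hτ'min (t + j) (by omega) (by omega))
      rw [show τ + 1 + (s - τ - 1) = s by omega] at hApos
      exact ⟨t + 1 + (s - τ - 1), by omega, le_of_eq hApos.symm⟩
    push_neg at hsσ
    -- recoupling: first the trajectory identifications
    have hB := claimB hE hE' hk1 hxk hxk' hxk1' hagree htx hvt htmin hτ'gt hτ'x hτ'min
    have hAfull : ∀ i, i ≤ τ' - t - 1 → wk E' (t + 1 + i) = wk E (τ + 1 + i) ∧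
        ∀ y, x < y → visits (wk E') (t + 1 + i) y = visits (wk E) (τ + 1 + i) y :=
      fun i hi => hA i (fun j hj hji => hτ'min (t + j) (by omega) (by omega))
    have hBfull : ∀ i, i ≤ τ - t - 1 → wk E' (τ' + 1 + i) = wk E (t + 1 + i) ∧
        ∀ y, y < x → visits (wk E') (τ' + 1 + i) y = visits (wk E) (t + 1 + i) y :=
      fun i hi => hB i (fun j hj hji => hτmin (t + j) (by omega) (by omega))
    have hXσ : wk E σ = x := by
      have := (hAfull (τ' - t - 1) le_rfl).1
      rw [show t + 1 + (τ' - t - 1) = τ' by omega, hτ'x] at this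
      rw [show σ = τ + 1 + (τ' - t - 1) by omega]
      exact this.symm
    have hX'σ : wk E' σ = x := by
      have := (hBfull (τ - t - 1) le_rfl).1
      rw [show t + 1 + (τ - t - 1) = τ by omega, hτx] at this
      rw [show σ = τ' + 1 + (τ - t - 1) by omega]
      exact this
    -- visit counts agree at time σ
    have hvisσ : ∀ y, visits (wk E) σ y = visits (wk E') σ y := by
      intro y
      have e1 : visits (wk E) σ y = visits (wk E) t y + cnt (wk E) t τ y + cnt (wk E) τ σ y := by
        rw [visits_add (wk E) (show τ ≤ σ by omega) y, visits_add (wk E) (le_of_lt hτgt) y]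
      have e2 : visits (wk E') σ y = visits (wk E') t y + cnt (wk E') t τ' y + cnt (wk E') τ' σ y := by
        rw [visits_add (wk E') (show τ' ≤ σ by omega) y, visits_add (wk E') (le_of_lt hτ'gt) y]
      have s1 : cnt (wk E) τ σ y = cnt (wk E') t τ' y := by
        have := cnt_shift (X := wk E) (Y := wk E') (a := τ) (b := t) (τ' - t) (y := y)
          (fun i hi => ((hAfull i (by omega)).1).symm)
        rwa [show τ + (τ' - t) = σ from rfl, show t + (τ' - t) = τ' by omega] at this
      have s2 : cnt (wk E) t τ y = cnt (wk E') τ' σ y := by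
        have := cnt_shift (X := wk E') (Y := wk E) (a := τ') (b := t) (τ - t) (y := y)
          (fun i hi => (hBfull i (by omega)).1)
        rw [show τ' + (τ - t) = σ by omega, show t + (τ - t) = τ by omega] at this
        exact this.symm
      rw [e1, e2, s1, s2, hvist y]; ring
    -- the walk at x has been used at least k+2 times by σ
    have hvσx : k + 2 ≤ visits (wk E) σ x := by
      have e1 : visits (wk E) σ x = visits (wk E) τ x + cnt (wk E) τ σ x := by
        rw [visits_add (wk E) (show τ ≤ σ by omega) x]
      have hvτ : visits (wk E) τ x = k + 1 := by
        rw [visits_add (wk E) (le_of_lt hτgt) x, hvt,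
          cnt_eq_one hτgt le_rfl hτx
            (fun u hu1 hu2 hu3 => ne_of_lt (hbelow u hu1 (lt_of_le_of_ne hu2 hu3)))]
      have hc1 : cnt (wk E) τ σ x = 1 := by
        apply cnt_eq_one (show τ < σ by omega) le_rfl hXσ
        intro u hu1 hu2 hu3
        have hiu : u = τ + 1 + (u - τ - 1) := by omega
        have := (hAfull (u - τ - 1) (by omega)).1
        rw [← hiu] at this
        rw [← this]
        exact hτ'min (t + 1 + (u - τ - 1)) (by omega) (by omega)
      rw [e1, hvτ, hc1]
    -- after σ the walks coincide
    have hD : ∀ i, wk E (σ + i) = wk E' (σ + i) ∧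
        ∀ y, visits (wk E) (σ + i) y = visits (wk E') (σ + i) y := by
      intro i
      induction i with
      | zero => exact ⟨by rw [Nat.add_zero, hXσ, hX'σ], fun y => by rw [Nat.add_zero]; exact hvisσ y⟩
      | succ i ih =>
          obtain ⟨hp, hv⟩ := ih
          have hps : wk E (σ + (i+1)) = wk E' (σ + (i+1)) := by
            rw [show σ + (i+1) = (σ + i) + 1 by omega, wk_succ, wk_succ, ← hp,
              ← hv (wk E (σ + i))]
            congr 1
            by_cases hpx : wk E (σ + i) = x
            · apply hagree
              right
              have : k + 2 ≤ visits (wk E) (σ + i) x :=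
                le_trans hvσx (visits_mono (wk E) (by omega) x)
              rw [hpx]
              omega
            · exact hagree _ _ (Or.inl hpx)
          refine ⟨hps, ?_⟩
          intro y
          rw [show σ + (i+1) = σ + i + 1 by omega] at hps ⊢
          rw [visits_succ, visits_succ, hv y, hps]
    obtain ⟨hp, -⟩ := hD (s - σ)
    rw [show σ + (s - σ) = s by omega] at hp
    exact ⟨s, le_rfl, le_of_eq hp⟩
/-- update one arrow of the system -/
def upd (E : ℤ → ℕ → ℤ) (x : ℤ) (c : ℕ) (v : ℤ) : ℤ → ℕ → ℤ :=
  fun y j => if y = x ∧ j = c then v else E y j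

lemma upd_same (E : ℤ → ℕ → ℤ) (x : ℤ) (c : ℕ) (v : ℤ) : upd E x c v x c = v := by
  simp [upd]

lemma upd_other (E : ℤ → ℕ → ℤ) (x : ℤ) (c : ℕ) (v : ℤ) {y : ℤ} {j : ℕ}
    (h : ¬(y = x ∧ j = c)) : upd E x c v y j = E y j := by
  simp only [upd, if_neg h]

lemma isArrow_upd {E : ℤ → ℕ → ℤ} (hE : IsArrow E) (x : ℤ) (c : ℕ) {v : ℤ}
    (hv : v = 1 ∨ v = -1) : IsArrow (upd E x c v) := by
  intro y j
  by_cases h : y = x ∧ j = c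
  · rw [upd, if_pos h]; exact hv
  · rw [upd_other E x c v h]; exact hE y j

lemma upd_comm_eq (E : ℤ → ℕ → ℤ) (x : ℤ) {a m b : ℕ} (ha : a < m) (hm : m < b)
    (hval : E x m = -1) (hEb : E x b = 1) :
    upd (upd (upd (upd E x m 1) x b (-1)) x a 1) x m (-1) = upd (upd E x a 1) x b (-1) := by
  funext y j
  by_cases hy : y = x
  · subst hy
    rcases eq_or_ne j a with rfl | hja
    · rw [upd_other _ _ _ _ (fun hc => absurd hc.2 (by omega)), upd_same,
        upd_other _ _ _ _ (fun hc => absurd hc.2 (by omega)), upd_same]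
    rcases eq_or_ne j m with rfl | hjm
    · rw [upd_same, upd_other _ _ _ _ (fun hc => absurd hc.2 (by omega)),
        upd_other _ _ _ _ (fun hc => absurd hc.2 (by omega)), hval]
    rcases eq_or_ne j b with rfl | hjb
    · rw [upd_other _ _ _ _ (fun hc => absurd hc.2 (by omega)),
        upd_other _ _ _ _ (fun hc => absurd hc.2 (by omega)), upd_same, upd_same]
    · rw [upd_other _ _ _ _ (fun hc => hjm hc.2), upd_other _ _ _ _ (fun hc => hja hc.2),
        upd_other _ _ _ _ (fun hc => hjb hc.2), upd_other _ _ _ _ (fun hc => hjm hc.2),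
        upd_other _ _ _ _ (fun hc => hjb hc.2), upd_other _ _ _ _ (fun hc => hja hc.2)]
  · rw [upd_other _ _ _ _ (fun hc => hy hc.1), upd_other _ _ _ _ (fun hc => hy hc.1),
      upd_other _ _ _ _ (fun hc => hy hc.1), upd_other _ _ _ _ (fun hc => hy hc.1),
      upd_other _ _ _ _ (fun hc => hy hc.1), upd_other _ _ _ _ (fun hc => hy hc.1)]

lemma longswap_le : ∀ (d : ℕ) (E : ℤ → ℕ → ℤ) (x : ℤ) (a b : ℕ), IsArrow E → 1 ≤ a →
    b = a + 1 + d → E x a = -1 → E x b = 1 → (∀ j, a < j → j < b → E x j = -1) →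
    ∀ s, ∃ u, u ≤ s ∧ wk E s ≤ wk (upd (upd E x a 1) x b (-1)) u := by
  intro d
  induction d with
  | zero =>
      intro E x a b hE ha hb hEa hEb hbet s
      subst hb
      apply swap_le hE _ ha hEa hEb
      · rw [upd_other _ _ _ _ (by omega : ¬(x = x ∧ a = a + 1)), upd_same]
      · rw [upd_same]
      · intro y j hyj
        rcases hyj with hy | ⟨hj1, hj2⟩
        · rw [upd_other _ _ _ _ (by tauto), upd_other _ _ _ _ (by tauto)]
        · rw [upd_other _ _ _ _ (by tauto), upd_other _ _ _ _ (by tauto)]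
      · exact isArrow_upd (isArrow_upd hE x a (Or.inl rfl)) x (a+1) (Or.inr rfl)
  | succ d ih =>
      intro E x a b hE ha hb hEa hEb hbet s
      set E1 := upd (upd E x (a+1+d) 1) x b (-1) with hE1def
      have hE1arrow : IsArrow E1 :=
        isArrow_upd (isArrow_upd hE x (a+1+d) (Or.inl rfl)) x b (Or.inr rfl)
      -- first adjacent swap at the top
      have step1 : ∃ u1, u1 ≤ s ∧ wk E s ≤ wk E1 u1 := by
        apply swap_le hE hE1arrow (by omega : 1 ≤ a+1+d) (hbet (a+1+d) (by omega) (by omega))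
          (by rw [show a + 1 + d + 1 = b by omega]; exact hEb)
        · rw [hE1def, upd_other _ _ _ _ (by omega : ¬(x = x ∧ a+1+d = b)), upd_same]
        · rw [hE1def, show a+1+d+1 = b by omega, upd_same]
        · intro y j hyj
          have h1 : ¬(y = x ∧ j = b) := by rcases hyj with h | h; exact fun hc => h hc.1; omega
          have h2 : ¬(y = x ∧ j = a+1+d) := by
            rcases hyj with h | h
            · exact fun hc => h hc.1
            · exact fun hc => h.1 hc.2
          rw [hE1def, upd_other _ _ _ _ h1, upd_other _ _ _ _ h2]
      obtain ⟨u1, hu1, hle1⟩ := step1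
      -- then the long swap below, by induction
      have step2 : ∃ u, u ≤ u1 ∧ wk E1 u1 ≤ wk (upd (upd E1 x a 1) x (a+1+d) (-1)) u := by
        apply ih E1 x a (a+1+d) hE1arrow ha rfl
        · rw [hE1def, upd_other _ _ _ _ (by omega : ¬(x = x ∧ a = b)),
            upd_other _ _ _ _ (by omega : ¬(x = x ∧ a = a+1+d))]
          exact hEa
        · rw [hE1def, upd_other _ _ _ _ (by omega : ¬(x = x ∧ a+1+d = b)), upd_same]
        · intro j hj1 hj2
          rw [hE1def, upd_other _ _ _ _ (by omega : ¬(x = x ∧ j = b)),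
            upd_other _ _ _ _ (by omega : ¬(x = x ∧ j = a+1+d))]
          exact hbet j hj1 (by omega)
      obtain ⟨u, hu, hle2⟩ := step2
      refine ⟨u, by omega, le_trans hle1 ?_⟩
      have heq : upd (upd E1 x a 1) x (a+1+d) (-1) = upd (upd E x a 1) x b (-1) :=
        upd_comm_eq E x (by omega) (by omega) (hbet (a+1+d) (by omega) (by omega)) hEb
      rw [← heq]
      exact hle2
/-- partial sums of arrows at a site -/
def PS (E : ℤ → ℕ → ℤ) (x : ℤ) (k : ℕ) : ℤ := ∑ j ∈ Finset.Icc 1 k, E x j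

lemma PS_zero (E : ℤ → ℕ → ℤ) (x : ℤ) : PS E x 0 = 0 := by
  simp [PS]

lemma PS_succ (E : ℤ → ℕ → ℤ) (x : ℤ) (k : ℕ) : PS E x (k+1) = PS E x k + E x (k+1) := by
  unfold PS
  rw [← Finset.sum_Icc_succ_top (by omega : 1 ≤ k + 1)]

lemma PS_upd (E : ℤ → ℕ → ℤ) (x : ℤ) (c : ℕ) (v : ℤ) (hc : 1 ≤ c) (y : ℤ) (kk : ℕ) :
    PS (upd E x c v) y kk = if y = x ∧ c ≤ kk then PS E y kk + (v - E x c) else PS E y kk := by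
  by_cases hcond : y = x ∧ c ≤ kk
  · rw [if_pos hcond]
    obtain ⟨rfl, hck⟩ := hcond
    have hmem : c ∈ Finset.Icc 1 kk := Finset.mem_Icc.mpr ⟨hc, hck⟩
    unfold PS
    rw [← Finset.sum_erase_add _ _ hmem, ← Finset.sum_erase_add _ (fun j => E y j) hmem]
    rw [upd_same]
    have : ∑ j ∈ (Finset.Icc 1 kk).erase c, upd E y c v y j
        = ∑ j ∈ (Finset.Icc 1 kk).erase c, E y j := by
      apply Finset.sum_congr rfl
      intro j hj
      exact upd_other _ _ _ _ (fun hcc => (Finset.ne_of_mem_erase hj) hcc.2)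
    rw [this]
    ring
  · rw [if_neg hcond]
    unfold PS
    apply Finset.sum_congr rfl
    intro j hj
    rw [Finset.mem_Icc] at hj
    apply upd_other
    intro hcc
    exact hcond ⟨hcc.1, by omega⟩

/-- discrepancy measure within window n -/
noncomputable def msr (R E : ℤ → ℕ → ℤ) (n : ℕ) : ℕ :=
  ∑ x ∈ Finset.Icc (-(n:ℤ)) (n:ℤ), ∑ k ∈ Finset.Icc 1 n, (PS R x k - PS E x k).toNat

lemma prec_iff {E R : ℤ → ℕ → ℤ} : Prec E R ↔ ∀ x k, PS E x k ≤ PS R x k := Iff.rfl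

lemma chain (R : ℤ → ℕ → ℤ) (hR : IsArrow R) (n : ℕ) :
    ∀ (N : ℕ) (E : ℤ → ℕ → ℤ), IsArrow E → Prec E R → msr R E n ≤ N →
      ∀ s ≤ n, ∃ u, u ≤ s ∧ wk E s ≤ wk R u := by
  intro N
  induction N with
  | zero =>
      intro E hE hER hm s hs
      refine ⟨s, le_rfl, le_of_eq ?_⟩
      have hzero : msr R E n = 0 := by omega
      have hall : ∀ x ∈ Finset.Icc (-(n:ℤ)) (n:ℤ), ∀ k ∈ Finset.Icc 1 n,
          (PS R x k - PS E x k).toNat = 0 := by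
        intro x hx k hk
        have h1 := (Finset.sum_eq_zero_iff.mp hzero) x hx
        exact (Finset.sum_eq_zero_iff.mp h1) k hk
      have hPSeq : ∀ y : ℤ, |y| ≤ (n:ℤ) → ∀ k ≤ n, PS E y k = PS R y k := by
        intro y hy k hk
        match k with
        | 0 => rw [PS_zero, PS_zero]
        | k+1 =>
            have hmem : y ∈ Finset.Icc (-(n:ℤ)) (n:ℤ) := Finset.mem_Icc.mpr (abs_le.mp hy)
            have := hall y hmem (k+1) (Finset.mem_Icc.mpr ⟨by omega, hk⟩)
            have h2 := prec_iff.mp hER y (k+1)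
            omega
      refine wk_local hE ?_ s hs
      intro y j hy hj1 hjn
      have e1 := hPSeq y hy j hjn
      have e2 := hPSeq y hy (j-1) (by omega)
      have e3 : PS E y j = PS E y (j-1) + E y j := by
        rw [show j = (j-1)+1 by omega] at e1 ⊢ ; exact PS_succ E y (j-1)
      have e4 : PS R y j = PS R y (j-1) + R y j := by
        rw [show j = (j-1)+1 by omega] at e1 ⊢ ; exact PS_succ R y (j-1)
      omega
  | succ N ih =>
      intro E hE hER hm s hs
      by_cases h0 : msr R E n ≤ N
      · exact ih E hE hER h0 s hs
      have hpos : 0 < msr R E n := by omega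
      -- locate a strict discrepancy in the window
      obtain ⟨x, hxmem, k', hk'mem, hterm⟩ : ∃ x ∈ Finset.Icc (-(n:ℤ)) (n:ℤ),
          ∃ k' ∈ Finset.Icc 1 n, 0 < (PS R x k' - PS E x k').toNat := by
        by_contra hc
        push_neg at hc
        have : msr R E n = 0 := Finset.sum_eq_zero (fun x hx => Finset.sum_eq_zero
          (fun k hk => by have := hc x hx k hk; omega))
        omega
      have hk'n : k' ≤ n := (Finset.mem_Icc.mp hk'mem).2
      have hex0 : ∃ k, 1 ≤ k ∧ PS E x k < PS R x k :=
        ⟨k', (Finset.mem_Icc.mp hk'mem).1, by omega⟩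
      set k₀ := Nat.find hex0 with hk₀def
      obtain ⟨hk₀1, hk₀lt⟩ : 1 ≤ k₀ ∧ PS E x k₀ < PS R x k₀ := Nat.find_spec hex0
      have hk₀n : k₀ ≤ n := le_trans (Nat.find_min' hex0 ⟨(Finset.mem_Icc.mp hk'mem).1, by omega⟩) hk'n
      have hprev : PS E x (k₀ - 1) = PS R x (k₀ - 1) := by
        rcases Nat.eq_or_lt_of_le hk₀1 with h1 | h1
        · rw [show k₀ - 1 = 0 by omega, PS_zero, PS_zero]
        · have hmin := Nat.find_min hex0 (show k₀ - 1 < k₀ by omega)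
          push_neg at hmin
          exact le_antisymm (prec_iff.mp hER x (k₀-1)) (hmin (by omega))
      have hsucc : PS E x k₀ = PS E x (k₀-1) + E x k₀ ∧ PS R x k₀ = PS R x (k₀-1) + R x k₀ := by
        constructor
        · rw [show k₀ = (k₀-1)+1 by omega]; exact PS_succ E x (k₀-1)
        · rw [show k₀ = (k₀-1)+1 by omega]; exact PS_succ R x (k₀-1)
      have hEk₀ : E x k₀ = -1 := by
        rcases hE x k₀ with h | h
        · rcases hR x k₀ with h' | h' <;> omega
        · exact h
      have hRk₀ : R x k₀ = 1 := by
        rcases hR x k₀ with h' | h'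
        · exact h'
        · omega
      have hgap : PS E x k₀ + 2 ≤ PS R x k₀ := by omega
      have hdiff2 : ∀ j, k₀ ≤ j → (∀ i, k₀ < i → i ≤ j → E x i = -1) →
          PS E x j + 2 ≤ PS R x j := by
        intro j hj
        induction j, hj using Nat.le_induction with
        | base => intro _; exact hgap
        | succ j hj ihj =>
            intro hbelow
            have h1 : PS E x (j+1) = PS E x j + E x (j+1) := PS_succ E x j
            have h2 : PS R x (j+1) = PS R x j + R x (j+1) := PS_succ R x j
            have h3 := ihj (fun i hi1 hi2 => hbelow i hi1 (by omega))
            have h4 := hbelow (j+1) (by omega) le_rfl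
            rcases hR x (j+1) with h5 | h5 <;> omega
      by_cases hex : ∃ j, k₀ < j ∧ E x j = 1
      · -- case (a): there is a later up-arrow at x; do a long swap
        set k₁ := Nat.find hex with hk₁def
        obtain ⟨hk₁gt, hk₁val⟩ : k₀ < k₁ ∧ E x k₁ = 1 := Nat.find_spec hex
        have hbet : ∀ i, k₀ < i → i < k₁ → E x i = -1 := by
          intro i hi1 hi2
          rcases hE x i with h | h
          · exact absurd ⟨hi1, h⟩ (Nat.find_min hex hi2)
          · exact h
        set E₁ := upd (upd E x k₀ 1) x k₁ (-1) with hE₁def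
        have hE₁arrow : IsArrow E₁ :=
          isArrow_upd (isArrow_upd hE x k₀ (Or.inl rfl)) x k₁ (Or.inr rfl)
        have hPS₁ : ∀ y kk, PS E₁ y kk =
            if y = x ∧ k₀ ≤ kk ∧ kk < k₁ then PS E y kk + 2 else PS E y kk := by
          intro y kk
          rw [hE₁def, PS_upd _ _ _ _ (by omega), PS_upd _ _ _ _ hk₀1,
            upd_other _ _ _ _ (fun hc => absurd hc.2 (by omega)), hEk₀, hk₁val]
          split_ifs <;> omega
        have hE₁R : Prec E₁ R := by
          intro y kk
          show PS E₁ y kk ≤ PS R y kk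
          rw [hPS₁ y kk]
          split_ifs with h
          · obtain ⟨rfl, h2, h3⟩ := h
            exact hdiff2 kk h2 (fun i hi1 hi2 => hbet i hi1 (by omega))
          · exact hER y kk
        have hmono : ∀ y kk, PS E y kk ≤ PS E₁ y kk := by
          intro y kk; rw [hPS₁ y kk]; split_ifs <;> omega
        have hstrict : PS E x k₀ < PS E₁ x k₀ := by
          rw [hPS₁ x k₀, if_pos ⟨rfl, le_rfl, hk₁gt⟩]; omega
        have hmsr : msr R E₁ n < msr R E n := by
          unfold msr
          apply Finset.sum_lt_sum
          · intro y hy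
            apply Finset.sum_le_sum
            intro kk hkk
            have h1 := hmono y kk
            have h2 := prec_iff.mp hE₁R y kk
            omega
          · refine ⟨x, hxmem, ?_⟩
            apply Finset.sum_lt_sum
            · intro kk hkk
              have h1 := hmono x kk
              omega
            · refine ⟨k₀, Finset.mem_Icc.mpr ⟨hk₀1, hk₀n⟩, ?_⟩
              have h2 := prec_iff.mp hE₁R x k₀
              omega
        obtain ⟨u, hu, hle⟩ :=
          longswap_le (k₁ - k₀ - 1) E x k₀ k₁ hE hk₀1 (by omega) hEk₀ hk₁val hbet s
        obtain ⟨u', hu', hle'⟩ := ih E₁ hE₁arrow hE₁R (by omega) u (by omega)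
        exact ⟨u', by omega, le_trans hle hle'⟩
      · -- case (b): all later arrows at x point down; flip beyond the horizon then swap
        push_neg at hex
        have hneg : ∀ j, k₀ < j → E x j = -1 := by
          intro j hj
          rcases hE x j with h | h
          · exact absurd h (hex j hj)
          · exact h
        set Em := upd E x (n+1) 1 with hEmdef
        have hEmarrow : IsArrow Em := isArrow_upd hE x (n+1) (Or.inl rfl)
        have hlocal : ∀ u ≤ n, wk E u = wk Em u := by
          apply wk_local hE
          intro y j hy hj1 hjn
          rw [hEmdef, upd_other _ _ _ _ (fun hc => absurd hc.2 (by omega))]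
        set E₁ := upd (upd Em x k₀ 1) x (n+1) (-1) with hE₁def
        have hE₁arrow : IsArrow E₁ :=
          isArrow_upd (isArrow_upd hEmarrow x k₀ (Or.inl rfl)) x (n+1) (Or.inr rfl)
        have hE₁eq : E₁ = upd E x k₀ 1 := by
          funext y j
          by_cases hy : y = x
          · subst hy
            rcases eq_or_ne j k₀ with rfl | hj0
            · rw [hE₁def, upd_other _ _ _ _ (fun hc => absurd hc.2 (by omega)), upd_same,
                upd_same]
            rcases eq_or_ne j (n+1) with rfl | hjn
            · rw [hE₁def, upd_same, upd_other _ _ _ _ (fun hc => hj0 hc.2)]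
              exact (hneg (n+1) (by omega)).symm
            · rw [hE₁def, upd_other _ _ _ _ (fun hc => hjn hc.2),
                upd_other _ _ _ _ (fun hc => hj0 hc.2), hEmdef,
                upd_other _ _ _ _ (fun hc => hjn hc.2),
                upd_other _ _ _ _ (fun hc => hj0 hc.2)]
          · rw [hE₁def, hEmdef,
              upd_other _ _ _ _ (fun hc => hy hc.1), upd_other _ _ _ _ (fun hc => hy hc.1),
              upd_other _ _ _ _ (fun hc => hy hc.1), upd_other _ _ _ _ (fun hc => hy hc.1)]
        have hPS₁ : ∀ y kk, PS E₁ y kk =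
            if y = x ∧ k₀ ≤ kk then PS E y kk + 2 else PS E y kk := by
          intro y kk
          rw [hE₁eq, PS_upd _ _ _ _ hk₀1, hEk₀]
          split_ifs <;> omega
        have hE₁R : Prec E₁ R := by
          intro y kk
          show PS E₁ y kk ≤ PS R y kk
          rw [hPS₁ y kk]
          split_ifs with h
          · obtain ⟨rfl, h2⟩ := h
            exact hdiff2 kk h2 (fun i hi1 hi2 => hneg i hi1)
          · exact hER y kk
        have hmono : ∀ y kk, PS E y kk ≤ PS E₁ y kk := by
          intro y kk; rw [hPS₁ y kk]; split_ifs <;> omega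
        have hstrict : PS E x k₀ < PS E₁ x k₀ := by
          rw [hPS₁ x k₀, if_pos ⟨rfl, le_rfl⟩]; omega
        have hmsr : msr R E₁ n < msr R E n := by
          unfold msr
          apply Finset.sum_lt_sum
          · intro y hy
            apply Finset.sum_le_sum
            intro kk hkk
            have h1 := hmono y kk
            have h2 := prec_iff.mp hE₁R y kk
            omega
          · refine ⟨x, hxmem, ?_⟩
            apply Finset.sum_lt_sum
            · intro kk hkk
              have h1 := hmono x kk
              omega
            · refine ⟨k₀, Finset.mem_Icc.mpr ⟨hk₀1, hk₀n⟩, ?_⟩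
              have h2 := prec_iff.mp hE₁R x k₀
              omega
        obtain ⟨u, hu, hle⟩ := longswap_le (n - k₀) Em x k₀ (n+1) hEmarrow hk₀1 (by omega)
          (by rw [hEmdef, upd_other _ _ _ _ (fun hc => absurd hc.2 (by omega))]; exact hEk₀)
          (by rw [hEmdef, upd_same])
          (fun j hj1 hj2 => by
            rw [hEmdef, upd_other _ _ _ _ (fun hc => absurd hc.2 (by omega))]
            exact hneg j hj1) s
        obtain ⟨u', hu', hle'⟩ := ih E₁ hE₁arrow hE₁R (by omega) u (by omega)
        refine ⟨u', by omega, ?_⟩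
        calc wk E s = wk Em s := hlocal s hs
          _ ≤ wk E₁ u := hle
          _ ≤ wk R u' := hle'

end AS

/-- If L ⪯ R then the running maxima satisfy
max_{m ≤ n} L_m ≤ max_{m ≤ n} R_m for every n. -/
theorem stmt_1 (L R : ℤ → ℕ → ℤ) (hL : IsArrow L) (hR : IsArrow R) (hLR : Prec L R)
    (XL XR : ℕ → ℤ) (hXL : IsWalk L XL) (hXR : IsWalk R XR) :
    ∀ n : ℕ,
      (Finset.range (n + 1)).sup' Finset.nonempty_range_add_one XL ≤
        (Finset.range (n + 1)).sup' Finset.nonempty_range_add_one XR := by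
  intro n
  apply Finset.sup'_le
  intro s hsmem
  have hs : s ≤ n := by
    have := Finset.mem_range.mp hsmem
    omega
  obtain ⟨u, hu, hle⟩ := AS.chain R hR n (AS.msr R L n) L hL hLR le_rfl s hs
  rw [AS.walk_unique hXL s]
  refine le_trans hle ?_
  rw [← AS.walk_unique hXR u]
  exact Finset.le_sup' XR (Finset.mem_range.mpr (by omega))
end

section
/- If two arrow systems satisfy L ⪯ R, then for every n ∈ ℕ, the running minimum of the walk L up to time n is at most the running minimum of the walk R up to time n, i.e., min_{m ≤ n} L_m ≤ min_{m ≤ n} R_m. -/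
open Filter Topology

namespace ArrowAux

variable {E L R : ℤ → ℕ → ℤ} {X XL XR : ℕ → ℤ}

/-- Number of departures from `x` strictly before time `n`. -/
def dd (X : ℕ → ℤ) (n : ℕ) (x : ℤ) : ℕ :=
  ((Finset.range n).filter (fun m => X m = x)).card

/-- Number of up-arrows among the first `k` arrows at `x`. -/
def Ups (E : ℤ → ℕ → ℤ) (x : ℤ) (k : ℕ) : ℕ :=
  ((Finset.range k).filter (fun j => E x (j + 1) = 1)).card

/-- Number of up-moves from `x` strictly before time `n`. -/
def upm (X : ℕ → ℤ) (n : ℕ) (x : ℤ) : ℕ :=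
  ((Finset.range n).filter (fun m => X m = x ∧ X (m + 1) = x + 1)).card

lemma filter_range_succ_card (p : ℕ → Prop) [DecidablePred p] (n : ℕ) :
    ((Finset.range (n + 1)).filter p).card
      = ((Finset.range n).filter p).card + if p n then 1 else 0 := by
  rw [Finset.range_add_one, Finset.filter_insert]
  split_ifs
  · rw [Finset.card_insert_of_notMem (by simp)]
  · rfl

lemma dd_succ (X : ℕ → ℤ) (n : ℕ) (x : ℤ) :
    dd X (n + 1) x = dd X n x + if X n = x then 1 else 0 :=
  filter_range_succ_card _ n

lemma upm_succ (X : ℕ → ℤ) (n : ℕ) (x : ℤ) :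
    upm X (n + 1) x = upm X n x + if X n = x ∧ X (n + 1) = x + 1 then 1 else 0 :=
  filter_range_succ_card _ n

lemma Ups_succ (E : ℤ → ℕ → ℤ) (x : ℤ) (k : ℕ) :
    Ups E x (k + 1) = Ups E x k + if E x (k + 1) = 1 then 1 else 0 :=
  filter_range_succ_card _ k

lemma Ups_mono (E : ℤ → ℕ → ℤ) (x : ℤ) {k k' : ℕ} (h : k ≤ k') :
    Ups E x k ≤ Ups E x k' :=
  Finset.card_le_card (Finset.filter_subset_filter _ (Finset.range_subset_range.mpr h))

lemma visits_self (X : ℕ → ℤ) (n : ℕ) : visits X n (X n) = dd X n (X n) + 1 := by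
  show dd X (n + 1) (X n) = _
  rw [dd_succ, if_pos rfl]

lemma step_eq (hW : IsWalk E X) (n : ℕ) :
    X (n + 1) = X n + E (X n) (dd X n (X n) + 1) := by
  rw [hW.2 n, visits_self]

lemma step_pm (hA : IsArrow E) (hW : IsWalk E X) (n : ℕ) :
    X (n + 1) = X n + 1 ∨ X (n + 1) = X n - 1 := by
  rw [step_eq hW n]
  rcases hA (X n) (dd X n (X n) + 1) with h | h <;> rw [h]
  · left; ring
  · right; ring

lemma sum_eq (hA : IsArrow E) (x : ℤ) :
    ∀ k : ℕ, (∑ j ∈ Finset.Icc 1 k, E x j) = 2 * (Ups E x k : ℤ) - k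
  | 0 => by
      rw [Finset.Icc_eq_empty (by omega)]
      simp [Ups]
  | (k + 1) => by
      rw [Finset.sum_Icc_succ_top (by omega), sum_eq hA x k, Ups_succ]
      rcases hA x (k + 1) with h | h
      · rw [if_pos h, h]; push_cast; ring
      · rw [if_neg (by simp [h]), h]; push_cast; ring

lemma ups_le_of_prec (hAL : IsArrow L) (hAR : IsArrow R) (hLR : Prec L R)
    (x : ℤ) (k : ℕ) : Ups L x k ≤ Ups R x k := by
  have h := hLR x k
  rw [sum_eq hAL x k, sum_eq hAR x k] at h
  omega

lemma upm_eq_Ups (hA : IsArrow E) (hW : IsWalk E X) (x : ℤ) :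
    ∀ n : ℕ, upm X n x = Ups E x (dd X n x)
  | 0 => by simp [upm, Ups, dd]
  | (n + 1) => by
      have ih := upm_eq_Ups hA hW x n
      rw [upm_succ, dd_succ]
      by_cases hx : X n = x
      · rw [if_pos hx, Ups_succ]
        have hstep := step_eq hW n
        rw [hx] at hstep
        rcases hA x (dd X n x + 1) with he | he
        · rw [if_pos ⟨hx, by rw [hstep, he]⟩, if_pos he, ih]
        · rw [if_neg (by rintro ⟨-, h2⟩; rw [hstep, he] at h2; omega),
              if_neg (by simp [he]), ih]
      · rw [if_neg (by rintro ⟨h1, -⟩; exact hx h1), if_neg hx, ih, Nat.add_zero,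
            Nat.add_zero]

lemma ite_and_one (p q : Prop) [Decidable p] [Decidable q] :
    (if p ∧ q then 1 else 0 : ℕ) = (if p then 1 else 0) * (if q then 1 else 0) := by
  by_cases hp : p <;> by_cases hq : q <;> simp [hp, hq]

set_option maxHeartbeats 1000000 in
/-- The key balance identity for a ±1 walk started at 0. -/
lemma bal (h0 : X 0 = 0) (hpm : ∀ n, X (n + 1) = X n + 1 ∨ X (n + 1) = X n - 1) (z : ℤ) :
    ∀ n : ℕ,
      upm X n (z - 1) + upm X n z + (if X n ≤ z then 1 else 0)
          + (if (0 : ℤ) = z then 1 else 0)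
        = dd X n z + (if X n = z then 1 else 0) + (if (0 : ℤ) ≤ z then 1 else 0) := by
  intro n
  induction n with
  | zero =>
      simp only [upm, dd, Finset.range_zero, Finset.filter_empty, Finset.card_empty, h0]
      split_ifs <;> omega
  | succ n ih =>
      rw [upm_succ, upm_succ, dd_succ]
      rcases hpm n with h | h
      · have e1 : (X n = z - 1 ∧ X (n + 1) = z - 1 + 1) ↔ X n = z - 1 := by omega
        have e2 : (X n = z ∧ X (n + 1) = z + 1) ↔ X n = z := by omega
        simp only [e1, e2]
        split_ifs at ih ⊢ <;> omega
      · have e1 : ¬(X n = z - 1 ∧ X (n + 1) = z - 1 + 1) := by omega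
        have e2 : ¬(X n = z ∧ X (n + 1) = z + 1) := by omega
        rw [if_neg e1, if_neg e2]
        split_ifs at ih ⊢ <;> omega

lemma sum_dd_eq (X : ℕ → ℤ) (T : Finset ℤ) :
    ∀ n : ℕ, ∑ x ∈ T, dd X n x = ((Finset.range n).filter (fun m => X m ∈ T)).card
  | 0 => by simp [dd]
  | (n + 1) => by
      rw [filter_range_succ_card, ← sum_dd_eq X T n]
      simp only [dd_succ]
      rw [Finset.sum_add_distrib, Finset.sum_ite_eq]

lemma sum_dd_le (X : ℕ → ℤ) (T : Finset ℤ) (n : ℕ) : ∑ x ∈ T, dd X n x ≤ n := by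
  rw [sum_dd_eq]
  exact le_trans (Finset.card_filter_le _ _) (by rw [Finset.card_range])

lemma sum_dd (X : ℕ → ℤ) (T : Finset ℤ) (n : ℕ) (h : ∀ m < n, X m ∈ T) :
    ∑ x ∈ T, dd X n x = n := by
  rw [sum_dd_eq, Finset.filter_true_of_mem (fun m hm => h m (Finset.mem_range.mp hm)),
    Finset.card_range]

lemma bound {μ n' : ℕ} (hdd : ∀ x, dd XL μ x ≤ dd XR n' x)
    (hstrict : dd XL μ (XL μ) < dd XR n' (XL μ)) : μ < n' := by
  set T : Finset ℤ := insert (XL μ) ((Finset.range μ).image XL) with hT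
  have h1 : ∑ x ∈ T, dd XL μ x = μ :=
    sum_dd XL T μ (fun m hm =>
      Finset.mem_insert_of_mem (Finset.mem_image_of_mem _ (Finset.mem_range.mpr hm)))
  have h2 : ∑ x ∈ T, dd XL μ x < ∑ x ∈ T, dd XR n' x :=
    Finset.sum_lt_sum (fun i _ => hdd i) ⟨XL μ, Finset.mem_insert_self _ _, hstrict⟩
  have h3 : ∑ x ∈ T, dd XR n' x ≤ n' := sum_dd_le XR T n'
  omega

/-- The core contradiction: if `L`'s walk sits strictly above `R`'s current position
and its departure counts are dominated by `R`'s, then its budget at its current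
site is strictly below `R`'s. -/
lemma core (hLR : Prec L R) (hAL : IsArrow L) (hAR : IsArrow R)
    (hWL : IsWalk L XL) (hWR : IsWalk R XR) {μ n' : ℕ}
    (hp : XR n' < XL μ) (hdd : ∀ x, dd XL μ x ≤ dd XR n' x) :
    dd XL μ (XL μ) < dd XR n' (XL μ) := by
  set z := XL μ with hz
  by_contra hcon
  have hk : dd XR n' z = dd XL μ z := le_antisymm (not_lt.mp hcon) (hdd z)
  have bL := bal hWL.1 (step_pm hAL hWL) z μ
  have bR := bal hWR.1 (step_pm hAR hWR) z n'
  rw [upm_eq_Ups hAL hWL (z - 1) μ, upm_eq_Ups hAL hWL z μ] at bL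
  rw [upm_eq_Ups hAR hWR (z - 1) n', upm_eq_Ups hAR hWR z n'] at bR
  have h1 : Ups L (z - 1) (dd XL μ (z - 1)) ≤ Ups R (z - 1) (dd XR n' (z - 1)) :=
    le_trans (Ups_mono L (z - 1) (hdd (z - 1))) (ups_le_of_prec hAL hAR hLR _ _)
  have h2 : Ups L z (dd XL μ z) ≤ Ups R z (dd XR n' z) := by
    rw [hk]; exact ups_le_of_prec hAL hAR hLR _ _
  split_ifs at bL bR <;> omega

/-- The excursion lemma: if `R` has just stepped down to `y - 1` at time `n'` and
`L` currently sits at or above `y` with dominated departure counts, then `L`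
reaches below `y` by time `n'` keeping the domination. -/
lemma exc (hLR : Prec L R) (hAL : IsArrow L) (hAR : IsArrow R)
    (hWL : IsWalk L XL) (hWR : IsWalk R XR) (n' : ℕ) (y : ℤ)
    (hRn : XR n' = y - 1) :
    ∀ fuel μ : ℕ, n' ≤ μ + fuel → y ≤ XL μ → (∀ x, dd XL μ x ≤ dd XR n' x) →
      ∃ m', m' ≤ n' ∧ XL m' < y ∧ ∀ x, dd XL m' x ≤ dd XR n' x := by
  intro fuel
  induction fuel with
  | zero =>
      intro μ hμ hy hdd
      have hcore := core hLR hAL hAR hWL hWR (by omega : XR n' < XL μ) hdd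
      have hb := bound hdd hcore
      omega
  | succ fuel ih =>
      intro μ hμ hy hdd
      have hcore := core hLR hAL hAR hWL hWR (by omega : XR n' < XL μ) hdd
      have hb : μ < n' := bound hdd hcore
      have hdd1 : ∀ x, dd XL (μ + 1) x ≤ dd XR n' x := by
        intro x
        rw [dd_succ]
        by_cases hxx : XL μ = x
        · rw [if_pos hxx, ← hxx]
          have := hcore
          omega
        · rw [if_neg hxx]
          have := hdd x
          omega
      by_cases hnext : XL (μ + 1) < y
      · exact ⟨μ + 1, by omega, hnext, hdd1⟩
      · exact ih (μ + 1) (by omega) (by omega) hdd1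

/-- Main coupling: at each time `n` of the `R`-walk there is an earlier time `m`
of the `L`-walk with `XL m ≤ XR n` and dominated departure counts. -/
lemma main_s2 (hLR : Prec L R) (hAL : IsArrow L) (hAR : IsArrow R)
    (hWL : IsWalk L XL) (hWR : IsWalk R XR) :
    ∀ n : ℕ, ∃ m, m ≤ n ∧ XL m ≤ XR n ∧ ∀ x, dd XL m x ≤ dd XR n x := by
  intro n
  induction n with
  | zero => exact ⟨0, le_refl 0, by rw [hWL.1, hWR.1], fun x => le_refl _⟩
  | succ n ih =>
      obtain ⟨m, hm, hle, hdd⟩ := ih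
      have hdd' : ∀ x, dd XL m x ≤ dd XR (n + 1) x := by
        intro x
        rw [dd_succ]
        have := hdd x
        omega
      by_cases hc : XL m ≤ XR (n + 1)
      · exact ⟨m, by omega, hc, hdd'⟩
      · rcases step_pm hAR hWR n with h | h
        · exact absurd (by omega : XL m ≤ XR (n + 1)) hc
        · obtain ⟨m', hm', hlt, hdd''⟩ :=
            exc hLR hAL hAR hWL hWR (n + 1) (XR n) (by omega) (n + 1) m (by omega)
              (by omega) hdd'
          exact ⟨m', hm', by omega, hdd''⟩

end ArrowAux

/-- If L ⪯ R then the running minima satisfy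
min_{m ≤ n} L_m ≤ min_{m ≤ n} R_m for every n. -/
theorem stmt_2 (L R : ℤ → ℕ → ℤ) (hL : IsArrow L) (hR : IsArrow R) (hLR : Prec L R)
    (XL XR : ℕ → ℤ) (hXL : IsWalk L XL) (hXR : IsWalk R XR) :
    ∀ n : ℕ,
      (Finset.range (n + 1)).inf' Finset.nonempty_range_add_one XL ≤
        (Finset.range (n + 1)).inf' Finset.nonempty_range_add_one XR := by
  intro n
  obtain ⟨n', hn', heq⟩ := Finset.exists_mem_eq_inf' (Finset.nonempty_range_add_one) XR
  obtain ⟨m, hm, hle, -⟩ := ArrowAux.main_s2 hLR hL hR hXL hXR n'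
  rw [heq]
  refine le_trans (Finset.inf'_le XL ?_) hle
  have := Finset.mem_range.mp hn'
  exact Finset.mem_range.mpr (by omega)
end

section
/- If two arrow systems satisfy L ⪯ R, then liminf_{n→∞} L_n ≤ liminf_{n→∞} R_n (in the extended integers). -/
open Filter Topology

/-- left departures from `y` strictly before time `m`. -/
def ld (X : ℕ → ℤ) (y : ℤ) (m : ℕ) : ℕ :=
  ((Finset.range m).filter (fun t => X t = y ∧ X (t+1) = y - 1)).card

/-- right departures from `y` strictly before time `m`. -/
def rd (X : ℕ → ℤ) (y : ℤ) (m : ℕ) : ℕ :=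
  ((Finset.range m).filter (fun t => X t = y ∧ X (t+1) = y + 1)).card

/-- number of `-1` arrows among the first `k` arrows at `y`. -/
def mm (E : ℤ → ℕ → ℤ) (y : ℤ) (k : ℕ) : ℕ :=
  ((Finset.Icc 1 k).filter (fun j => E y j = -1)).card

lemma count_succ (p : ℕ → Prop) [DecidablePred p] (m : ℕ) :
    ((Finset.range (m+1)).filter p).card
      = ((Finset.range m).filter p).card + (if p m then 1 else 0) := by
  rw [Finset.range_add_one, Finset.filter_insert]
  split
  · rw [Finset.card_insert_of_notMem (by simp)]
  · simp

lemma ld_succ (X : ℕ → ℤ) (y : ℤ) (m : ℕ) :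
    ld X y (m+1) = ld X y m + (if X m = y ∧ X (m+1) = y - 1 then 1 else 0) :=
  count_succ _ m

lemma rd_succ (X : ℕ → ℤ) (y : ℤ) (m : ℕ) :
    rd X y (m+1) = rd X y m + (if X m = y ∧ X (m+1) = y + 1 then 1 else 0) :=
  count_succ _ m

lemma visits_succ (X : ℕ → ℤ) (y : ℤ) (m : ℕ) :
    visits X (m+1) y = visits X m y + (if X (m+1) = y then 1 else 0) :=
  count_succ _ (m+1)

lemma ld_mono (X : ℕ → ℤ) (y : ℤ) {m m' : ℕ} (h : m ≤ m') : ld X y m ≤ ld X y m' :=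
  Finset.card_le_card (Finset.filter_subset_filter _ (Finset.range_subset_range.2 h))

lemma rd_mono (X : ℕ → ℤ) (y : ℤ) {m m' : ℕ} (h : m ≤ m') : rd X y m ≤ rd X y m' :=
  Finset.card_le_card (Finset.filter_subset_filter _ (Finset.range_subset_range.2 h))

lemma visits_mono (X : ℕ → ℤ) (y : ℤ) {m m' : ℕ} (h : m ≤ m') :
    visits X m y ≤ visits X m' y :=
  Finset.card_le_card (Finset.filter_subset_filter _ (Finset.range_subset_range.2 (by omega)))

section walk
variable {E : ℤ → ℕ → ℤ} {X : ℕ → ℤ}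

lemma step_pm (hE : IsArrow E) (hX : IsWalk E X) (n : ℕ) :
    X (n+1) = X n + 1 ∨ X (n+1) = X n - 1 := by
  rcases hE (X n) (visits X n (X n)) with h | h
  · left; rw [hX.2 n, h]
  · right; rw [hX.2 n, h]; ring

lemma speed (hE : IsArrow E) (hX : IsWalk E X) (n : ℕ) : (X n).natAbs ≤ n := by
  induction n with
  | zero => simp [hX.1]
  | succ n ih => rcases step_pm hE hX n with h | h <;> omega

/-- visits = departures + (currently there). -/
lemma visits_eq_dep (hE : IsArrow E) (hX : IsWalk E X) (y : ℤ) (m : ℕ) :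
    visits X m y = ld X y m + rd X y m + (if X m = y then 1 else 0) := by
  induction m with
  | zero =>
      simp [visits, ld, rd, Finset.range_one, Finset.filter_singleton]
      split_ifs <;> simp
  | succ m ih =>
      rw [visits_succ, ih, ld_succ, rd_succ]
      rcases step_pm hE hX m with h | h <;> by_cases hy : X m = y <;>
        simp [hy, h] <;> split_ifs <;> omega

/-- crossing identity for the edge `(y-1, y)`. -/
lemma cross (hE : IsArrow E) (hX : IsWalk E X) (y : ℤ) (m : ℕ) :
    (rd X (y-1) m : ℤ) + (if y ≤ 0 then 1 else 0)
      = (ld X y m : ℤ) + (if y ≤ X m then 1 else 0) := by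
  induction m with
  | zero => simp [ld, rd, hX.1]
  | succ m ih =>
      rw [ld_succ, rd_succ]
      rcases step_pm hE hX m with h | h <;>
        push_cast <;> split_ifs at * <;> omega

/-- arrivals identity. -/
lemma visits_eq_arr (hE : IsArrow E) (hX : IsWalk E X) (y : ℤ) (m : ℕ) :
    visits X m y = (if y = 0 then 1 else 0) + ld X (y+1) m + rd X (y-1) m := by
  induction m with
  | zero =>
      have h0 : visits X 0 y = if X 0 = y then 1 else 0 := by
        simp [visits, Finset.range_one, Finset.filter_singleton]
        split_ifs <;> simp
      rw [h0, hX.1]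
      have h1 : ld X (y+1) 0 = 0 := by simp [ld]
      have h2 : rd X (y-1) 0 = 0 := by simp [rd]
      rw [h1, h2]
      by_cases h : y = 0
      · subst h; simp
      · rw [if_neg (by omega : ¬ (0:ℤ) = y), if_neg h]
  | succ m ih =>
      rw [visits_succ, ih, ld_succ, rd_succ]
      rcases step_pm hE hX m with h | h
      · have hld : ¬ (X m = y + 1 ∧ X (m + 1) = y + 1 - 1) := by
          rintro ⟨a, b⟩; omega
        have hrd : (X m = y - 1 ∧ X (m + 1) = y - 1 + 1) ↔ (X (m+1) = y) := by
          constructor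
          · rintro ⟨a, b⟩; omega
          · intro hb; omega
        simp only [hrd, if_neg hld]
        omega
      · have hrd : ¬ (X m = y - 1 ∧ X (m + 1) = y - 1 + 1) := by
          rintro ⟨a, b⟩; omega
        have hld : (X m = y + 1 ∧ X (m + 1) = y + 1 - 1) ↔ (X (m+1) = y) := by
          constructor
          · rintro ⟨a, b⟩; omega
          · intro hb; omega
        simp only [hld, if_neg hrd]
        omega

lemma mm_succ (E : ℤ → ℕ → ℤ) (y : ℤ) (k : ℕ) :
    mm E y (k+1) = mm E y k + (if E y (k+1) = -1 then 1 else 0) := by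
  unfold mm
  rw [show Finset.Icc 1 (k+1) = insert (k+1) (Finset.Icc 1 k) by
        ext j; simp [Finset.mem_Icc, Finset.mem_insert]; omega,
      Finset.filter_insert]
  split
  · rw [Finset.card_insert_of_notMem (by simp)]
  · simp

lemma mm_mono (E : ℤ → ℕ → ℤ) (y : ℤ) {k k' : ℕ} (h : k ≤ k') : mm E y k ≤ mm E y k' :=
  Finset.card_le_card (Finset.filter_subset_filter _ (Finset.Icc_subset_Icc_right h))

lemma sum_eq_mm (hE : IsArrow E) (y : ℤ) (k : ℕ) :
    ∑ j ∈ Finset.Icc 1 k, E y j = (k : ℤ) - 2 * mm E y k := by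
  induction k with
  | zero => simp [mm]
  | succ k ih =>
      rw [Finset.sum_Icc_succ_top (by omega), ih, mm_succ]
      rcases hE y (k+1) with h | h <;> simp [h] <;> push_cast <;> omega

/-- the `t`-th departure from `y` uses arrow `t`: count of used `-1` arrows. -/
lemma ld_eq_mm (hE : IsArrow E) (hX : IsWalk E X) (y : ℤ) (m : ℕ) :
    ld X y m = mm E y (ld X y m + rd X y m) := by
  induction m with
  | zero => simp [ld, rd, mm]
  | succ m ih =>
      rw [ld_succ, rd_succ]
      by_cases hy : X m = y
      · have hstep : X (m+1) = y + E y (ld X y m + rd X y m + 1) := by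
          have := hX.2 m
          rw [hy] at this
          rw [this, visits_eq_dep hE hX, if_pos hy]
        rcases hE y (ld X y m + rd X y m + 1) with h | h
        · rw [h] at hstep
          have h1 : ¬ (X m = y ∧ X (m+1) = y - 1) := by
            rintro ⟨_, h2⟩; rw [hstep] at h2; omega
          have h2 : (X m = y ∧ X (m+1) = y + 1) := ⟨hy, hstep⟩
          simp only [if_pos h2, if_neg h1, add_zero]
          rw [← add_assoc, mm_succ, if_neg (by rw [h]; omega)]
          omega
        · rw [h] at hstep
          have h1 : (X m = y ∧ X (m+1) = y - 1) := ⟨hy, by rw [hstep]; ring⟩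
          have h2 : ¬ (X m = y ∧ X (m+1) = y + 1) := by
            rintro ⟨_, h2⟩; rw [hstep] at h2; omega
          simp only [if_pos h1, if_neg h2, add_zero]
          rw [show ld X y m + 1 + rd X y m = (ld X y m + rd X y m) + 1 by omega,
              mm_succ, if_pos h]
          omega
      · have h1 : ¬ (X m = y ∧ X (m+1) = y - 1) := fun h => hy h.1
        have h2 : ¬ (X m = y ∧ X (m+1) = y + 1) := fun h => hy h.1
        simp only [if_neg h1, if_neg h2, add_zero]
        exact ih

end walk

lemma mm_le_of_prec {L R : ℤ → ℕ → ℤ} (hL : IsArrow L) (hR : IsArrow R)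
    (hLR : Prec L R) (y : ℤ) (k : ℕ) : mm R y k ≤ mm L y k := by
  have h := hLR y k
  rw [sum_eq_mm hL, sum_eq_mm hR] at h
  omega

section walk2
variable {E : ℤ → ℕ → ℤ} {X : ℕ → ℤ}

/-- total departures by time `t+1` equal visits up to time `t`. -/
lemma dep_succ_eq_visits (hE : IsArrow E) (hX : IsWalk E X) (y : ℤ) (t : ℕ) :
    ld X y (t+1) + rd X y (t+1) = visits X t y := by
  rw [ld_succ, rd_succ, visits_eq_dep hE hX]
  by_cases hyt : X t = y
  · rcases step_pm hE hX t with hh | hh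
    · rw [if_neg (by rintro ⟨a, b⟩; omega), if_pos ⟨hyt, by omega⟩, if_pos hyt]
      omega
    · rw [if_pos ⟨hyt, by omega⟩, if_neg (by rintro ⟨a, b⟩; omega), if_pos hyt]
      omega
  · rw [if_neg (fun hc => hyt hc.1), if_neg (fun hc => hyt hc.1), if_neg hyt]
    omega

end walk2

/-- THE MAIN INVARIANT: tracked left-departure counts of the R-walk are
  eventually dominated by those of the L-walk. -/
lemma main_inv {L R : ℤ → ℕ → ℤ} {XL XR : ℕ → ℤ}
    (hL : IsArrow L) (hR : IsArrow R) (hLR : Prec L R)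
    (hXL : IsWalk L XL) (hXR : IsWalk R XR) (Track : ℤ → Prop)
    (hTop : ∀ y, Track y →
      ((∀ K, ∃ nn, K ≤ ld XL y nn) ∨
       ((∀ N, ∃ t, N ≤ t ∧ y ≤ XL t) ∧ Track (y+1)))) :
    ∀ m, ∃ n, ∀ y, Track y → ld XR y m ≤ ld XL y n := by
  intro m
  induction m with
  | zero => exact ⟨0, fun y _ => by simp [ld]⟩
  | succ m ih =>
    obtain ⟨n, hn⟩ := ih
    rcases step_pm hR hXR m with h | h
    · refine ⟨n, fun y hy => ?_⟩
      rw [ld_succ, if_neg (by rintro ⟨a, b⟩; omega), add_zero]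
      exact hn y hy
    · by_cases hTr : Track (XR m)
      · -- need n' ≥ n with ld XL (XR m) n' ≥ ld XR (XR m) m + 1
        suffices hgoal : ∃ n', n ≤ n' ∧ ld XR (XR m) m + 1 ≤ ld XL (XR m) n' by
          obtain ⟨n', hnn', hld⟩ := hgoal
          refine ⟨n', fun y hy => ?_⟩
          rw [ld_succ]
          by_cases hyy : y = XR m
          · subst hyy
            rw [if_pos ⟨rfl, by omega⟩]
            exact hld
          · rw [if_neg (fun hc => hyy hc.1.symm), add_zero]
            exact le_trans (hn y hy) (ld_mono XL y hnn')
        have hq : ld XR (XR m) m ≤ ld XL (XR m) n := hn (XR m) hTr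
        rcases hTop (XR m) hTr with hUnb | ⟨hfreq, hTr1⟩
        · obtain ⟨nn, hnn⟩ := hUnb (ld XR (XR m) m + 1)
          exact ⟨max n nn, le_max_left _ _,
            le_trans hnn (ld_mono _ _ (le_max_right _ _))⟩
        · -- arrow-counting argument
          have hmmR : mm R (XR m) (ld XR (XR m) m + rd XR (XR m) m + 1)
              = ld XR (XR m) m + 1 := by
            have hthis := ld_eq_mm hR hXR (XR m) (m+1)
            rw [ld_succ, rd_succ, if_pos ⟨rfl, by omega⟩,
              if_neg (by rintro ⟨a, b⟩; omega), add_zero] at hthis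
            rw [show ld XR (XR m) m + rd XR (XR m) m + 1
                = ld XR (XR m) m + 1 + rd XR (XR m) m by omega]
            omega
          have hmmL : ld XR (XR m) m + 1
              ≤ mm L (XR m) (ld XR (XR m) m + rd XR (XR m) m + 1) :=
            hmmR ▸ mm_le_of_prec hL hR hLR (XR m) _
          have hjv : ld XR (XR m) m + rd XR (XR m) m + 1 = visits XR m (XR m) := by
            rw [visits_eq_dep hR hXR, if_pos rfl]
          obtain ⟨t, htn, hty⟩ := hfreq n
          have hVL : ld XR (XR m) m + rd XR (XR m) m + 1 ≤ visits XL t (XR m) := by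
            rw [hjv, visits_eq_arr hR hXR, visits_eq_arr hL hXL]
            have h1 : ld XR (XR m + 1) m ≤ ld XL (XR m + 1) t :=
              le_trans (hn (XR m + 1) hTr1) (ld_mono _ _ htn)
            have c1 := cross hR hXR (XR m) m
            have c2 := cross hL hXL (XR m) t
            have h2 : ld XR (XR m) m ≤ ld XL (XR m) t := le_trans hq (ld_mono _ _ htn)
            rw [if_pos (le_refl (XR m))] at c1
            rw [if_pos hty] at c2
            split_ifs at c1 c2 <;> omega
          have hdep : ld XR (XR m) m + rd XR (XR m) m + 1
              ≤ ld XL (XR m) (t+1) + rd XL (XR m) (t+1) := by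
            rw [dep_succ_eq_visits hL hXL]
            exact hVL
          have hfinal : ld XR (XR m) m + 1 ≤ ld XL (XR m) (t+1) := by
            rw [ld_eq_mm hL hXL (XR m) (t+1)]
            exact le_trans hmmL (mm_mono L (XR m) hdep)
          exact ⟨max n (t+1), le_max_left _ _,
            le_trans hfinal (ld_mono _ _ (le_max_right _ _))⟩
      · refine ⟨n, fun y hy => ?_⟩
        rw [ld_succ]
        rw [if_neg (by rintro ⟨a, b⟩; exact hTr (a ▸ hy)), add_zero]
        exact hn y hy

lemma exists_ge_of_card (s : Finset ℕ) (N : ℕ) (h : N + 1 ≤ s.card) :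
    ∃ t ∈ s, N ≤ t := by
  by_contra hcon
  push_neg at hcon
  have : s ⊆ Finset.range N := fun t ht => Finset.mem_range.2 (hcon t ht)
  have := Finset.card_le_card this
  simp [Finset.card_range] at this
  omega

/-- if the walk is at some point strictly below `y ≤ 0`, it has left-departed `y`. -/
lemma ld_pos_of_low {E : ℤ → ℕ → ℤ} {X : ℕ → ℤ} (hE : IsArrow E) (hX : IsWalk E X)
    {y : ℤ} {m : ℕ} (hy : y ≤ 0) (hm : X m < y) : 1 ≤ ld X y m := by
  have c1 := cross hE hX y m
  rw [if_pos hy, if_neg (by omega)] at c1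
  omega

lemma visits_unbounded {X : ℕ → ℤ} {z : ℤ}
    (h : ∀ N, ∃ m, N ≤ m ∧ X m = z) : ∀ K, ∃ m, K ≤ visits X m z := by
  intro K
  induction K with
  | zero => exact ⟨0, Nat.zero_le _⟩
  | succ K ihK =>
      obtain ⟨m, hm⟩ := ihK
      obtain ⟨m', hm', hz'⟩ := h (m+1)
      refine ⟨m', ?_⟩
      have h1 : visits X m z ≤ visits X (m'-1) z := visits_mono X z (by omega)
      have h2 : visits X m' z = visits X (m'-1) z + 1 := by
        have := visits_succ X z (m'-1)
        rw [show m' - 1 + 1 = m' by omega] at this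
        rw [this, if_pos hz']
      omega

lemma endgame {L R : ℤ → ℕ → ℤ} {XL XR : ℕ → ℤ}
    (hL : IsArrow L) (hR : IsArrow R) (hLR : Prec L R)
    (hXL : IsWalk L XL) (hXR : IsWalk R XR) (c : ℤ) (N0 : ℕ)
    (hev : ∀ t, N0 ≤ t → c ≤ XL t)
    (hfreqR : ∀ N : ℕ, ∃ m, N ≤ m ∧ XR m < c)
    (hinv : ∀ m, ∃ n, ∀ y : ℤ, y ≤ c + 1 → ld XR y m ≤ ld XL y n) : False := by
  by_cases hbdd : ∃ a : ℤ, ∀ m, a ≤ XR m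
  · obtain ⟨a, ha⟩ := hbdd
    -- find a site `z ≤ c` that the R walk left-departs unboundedly often
    have hz' : ∃ z', a ≤ z' ∧ z' < c ∧ ∀ N, ∃ m, N ≤ m ∧ XR m = z' := by
      by_contra hcon
      push_neg at hcon
      have key : ∀ k : ℕ, (a + k ≤ c) → ∃ N, ∀ m, N ≤ m →
          ¬ (a ≤ XR m ∧ XR m < a + k) := by
        intro k
        induction k with
        | zero => exact fun _ => ⟨0, fun m _ h => by push_cast at h; omega⟩
        | succ k ihk =>
            intro hkc
            have hkc' : a + (k : ℤ) ≤ c := by push_cast at hkc ⊢; omega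
            obtain ⟨N1, hN1⟩ := ihk hkc'
            obtain ⟨N2, hN2⟩ := hcon (a + k) (by omega) (by push_cast at hkc; omega)
            refine ⟨max N1 N2, fun m hm hcontra => ?_⟩
            have h1 := hN1 m (by omega)
            have h2 := hN2 m (by omega)
            push_cast at hcontra h1
            omega
      obtain ⟨m0, -, hm0⟩ := hfreqR 0
      have hac : a < c := lt_of_le_of_lt (ha m0) hm0
      obtain ⟨N, hN⟩ := key (c - a).toNat
        (by rw [Int.toNat_of_nonneg (by omega)]; omega)
      obtain ⟨m, hmN, hmc⟩ := hfreqR N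
      refine hN m hmN ⟨ha m, ?_⟩
      rw [Int.toNat_of_nonneg (by omega : (0:ℤ) ≤ c - a)]
      omega
    obtain ⟨z', haz, hzc, hvis⟩ := hz'
    have hdp : ∀ K, ∃ m, K ≤ ld XR z' m + rd XR z' m := by
      intro K
      obtain ⟨m, hm⟩ := visits_unbounded hvis K
      exact ⟨m + 1, by rw [dep_succ_eq_visits hR hXR]; exact hm⟩
    have hzz : ∃ z : ℤ, z ≤ c ∧ ∀ K, ∃ m, K ≤ ld XR z m := by
      by_cases hldz : ∀ K, ∃ m, K ≤ ld XR z' m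
      · exact ⟨z', by omega, hldz⟩
      · push_neg at hldz
        obtain ⟨K0, hK0⟩ := hldz
        refine ⟨z' + 1, by omega, fun K => ?_⟩
        obtain ⟨m, hm⟩ := hdp (K + K0 + 1)
        have c1 := cross hR hXR (z' + 1) m
        rw [show z' + 1 - 1 = z' by ring] at c1
        have := hK0 m
        refine ⟨m, ?_⟩
        split_ifs at c1 <;> omega
    obtain ⟨z, hzle, hzunb⟩ := hzz
    obtain ⟨m, hm⟩ := hzunb (N0 + 1)
    obtain ⟨n, hn⟩ := hinv m
    have hL1 : N0 + 1 ≤ ld XL z n := le_trans hm (hn z (by omega))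
    obtain ⟨t, hts, htN⟩ := exists_ge_of_card _ N0 hL1
    simp only [Finset.mem_filter, Finset.mem_range] at hts
    have := hev (t+1) (by omega)
    omega
  · push_neg at hbdd
    set w := min c 0 - N0 with hw
    obtain ⟨m, hm⟩ := hbdd w
    have hld : 1 ≤ ld XR w m := ld_pos_of_low hR hXR (by omega) hm
    obtain ⟨n, hn⟩ := hinv m
    have hL1 : 1 ≤ ld XL w n := le_trans hld (hn w (by omega))
    obtain ⟨t, hts, -⟩ := exists_ge_of_card _ 0 hL1
    simp only [Finset.mem_filter, Finset.mem_range] at hts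
    have hsp := speed hL hXL (t+1)
    have := hev (t+1) (by omega)
    omega

/-- KEY: if eventually `XL ≥ c0` then eventually `XR ≥ c0`. -/
lemma key_transfer {L R : ℤ → ℕ → ℤ} {XL XR : ℕ → ℤ}
    (hL : IsArrow L) (hR : IsArrow R) (hLR : Prec L R)
    (hXL : IsWalk L XL) (hXR : IsWalk R XR) (c0 : ℤ) (N : ℕ)
    (hev : ∀ t, N ≤ t → c0 ≤ XL t) : ∃ N', ∀ t, N' ≤ t → c0 ≤ XR t := by
  by_contra hcon
  push_neg at hcon
  by_cases hT : ∀ c' : ℤ, ∃ M, ∀ t, M ≤ t → c' ≤ XL t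
  · have hinv := main_inv hL hR hLR hXL hXR (fun _ => True)
      (fun y _ => Or.inr ⟨fun N' => by
        obtain ⟨M, hM⟩ := hT y
        exact ⟨max N' M, le_max_left _ _, hM _ (le_max_right _ _)⟩, trivial⟩)
    exact endgame hL hR hLR hXL hXR c0 N hev
      (fun N' => by obtain ⟨t, ht, ht'⟩ := hcon N'; exact ⟨t, ht, ht'⟩)
      (fun m => by obtain ⟨n, hn⟩ := hinv m; exact ⟨n, fun y _ => hn y trivial⟩)
  · push_neg at hT
    obtain ⟨c1, hc1⟩ := hT
    have hbdd : ∃ b : ℤ, ∀ z, (∃ M, ∀ t, M ≤ t → z ≤ XL t) → z ≤ b := by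
      refine ⟨c1, fun z ⟨M, hM⟩ => ?_⟩
      obtain ⟨t, htM, htc⟩ := hc1 M
      have := hM t htM
      omega
    obtain ⟨c, ⟨Nc, hNc⟩, hmax⟩ := Int.exists_greatest_of_bdd hbdd ⟨c0, N, hev⟩
    have hc0c : c0 ≤ c := hmax c0 ⟨N, hev⟩
    have hnot : ¬ ∃ M, ∀ t, M ≤ t → c + 1 ≤ XL t := fun hh => by
      have := hmax (c+1) hh; omega
    push_neg at hnot
    have hfreqc : ∀ M, ∃ t, M ≤ t ∧ XL t = c := by
      intro M
      obtain ⟨t, ht, htc⟩ := hnot (max M Nc)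
      exact ⟨t, le_trans (le_max_left _ _) ht,
        le_antisymm (by omega) (hNc t (le_trans (le_max_right _ _) ht))⟩
    have hldc : ∀ m, ld XL c m ≤ Nc := by
      intro m
      have hsub : (Finset.range m).filter (fun t => XL t = c ∧ XL (t+1) = c - 1)
          ⊆ Finset.range Nc := by
        intro t ht
        simp only [Finset.mem_filter, Finset.mem_range] at ht ⊢
        by_contra hge
        have := hNc (t+1) (by omega)
        omega
      calc ld XL c m ≤ (Finset.range Nc).card := Finset.card_le_card hsub
        _ = Nc := Finset.card_range Nc
    have hldc1 : ∀ K, ∃ nn, K ≤ ld XL (c+1) nn := by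
      intro K
      obtain ⟨m, hm⟩ := visits_unbounded hfreqc (K + Nc + 2)
      have harr := visits_eq_arr hL hXL c m
      have hcr := cross hL hXL c m
      have hb := hldc m
      refine ⟨m, ?_⟩
      split_ifs at harr hcr <;> omega
    have hinv := main_inv hL hR hLR hXL hXR (fun y => y ≤ c + 1)
      (fun y hy => by
        by_cases hyc : y = c + 1
        · subst hyc; exact Or.inl hldc1
        · exact Or.inr ⟨fun N' => ⟨max N' Nc, le_max_left _ _,
            le_trans (by omega) (hNc _ (le_max_right _ _))⟩, by simp at hy ⊢; omega⟩)
    exact endgame hL hR hLR hXL hXR c Nc hNc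
      (fun N' => by obtain ⟨t, ht, ht'⟩ := hcon N'; exact ⟨t, ht, by omega⟩)
      hinv


theorem aux_stmt_3 (L R : ℤ → ℕ → ℤ) (hL : IsArrow L) (hR : IsArrow R) (hLR : Prec L R)
    (XL XR : ℕ → ℤ) (hXL : IsWalk L XL) (hXR : IsWalk R XR) :
    Filter.liminf (fun n => ((XL n : ℝ) : EReal)) atTop ≤
      Filter.liminf (fun n => ((XR n : ℝ) : EReal)) atTop := by
  apply le_of_forall_lt
  intro x hx
  obtain ⟨y, hxy, hyA⟩ := exists_between hx
  have hytop : y ≠ ⊤ := (lt_of_lt_of_le hyA (liminf_le_of_frequently_le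
    (Frequently.of_forall (fun n => le_top)))).ne
  have hybot : y ≠ ⊥ := (lt_of_le_of_lt bot_le hxy).ne'
  lift y to ℝ using ⟨hytop, hybot⟩ with r
  have hev : ∀ᶠ n in atTop, (r : EReal) < ((XL n : ℝ) : EReal) :=
    Filter.eventually_lt_of_lt_liminf hyA
  have hev2 : ∀ᶠ n in atTop, (⌊r⌋ + 1 : ℤ) ≤ XL n := by
    filter_upwards [hev] with n hn
    have : r < ((XL n : ℤ) : ℝ) := EReal.coe_lt_coe_iff.1 hn
    have := Int.floor_lt.2 this
    omega
  rw [Filter.eventually_atTop] at hev2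
  obtain ⟨N, hN⟩ := hev2
  obtain ⟨N', hN'⟩ := key_transfer hL hR hLR hXL hXR (⌊r⌋ + 1) N hN
  have hliminf : (((⌊r⌋ + 1 : ℤ) : ℝ) : EReal)
      ≤ Filter.liminf (fun n => ((XR n : ℝ) : EReal)) atTop := by
    apply Filter.le_liminf_of_le (by isBoundedDefault)
    rw [Filter.eventually_atTop]
    exact ⟨N', fun t ht => by
      have := hN' t ht
      exact EReal.coe_le_coe_iff.2 (by exact_mod_cast this)⟩
  refine lt_of_lt_of_le (lt_trans hxy ?_) hliminf
  rw [EReal.coe_lt_coe_iff]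
  push_cast
  exact Int.lt_floor_add_one r

/-- If L ⪯ R then liminf L_n ≤ liminf R_n in the extended (real) line. -/
theorem stmt_3 (L R : ℤ → ℕ → ℤ) (hL : IsArrow L) (hR : IsArrow R) (hLR : Prec L R)
    (XL XR : ℕ → ℤ) (hXL : IsWalk L XL) (hXR : IsWalk R XR) :
    Filter.liminf (fun n => ((XL n : ℝ) : EReal)) atTop ≤
      Filter.liminf (fun n => ((XR n : ℝ) : EReal)) atTop := by
  exact aux_stmt_3 L R hL hR hLR XL XR hXL hXR
end

section
/- Suppose L ⪯ R are arrow systems and the walk L tends to +∞. If the walk R tends to +∞, then for every x ∈ ℤ, the number of times the walk L visits x is at least the number of times the walk R visits x. -/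
open Filter Topology

namespace Stmt4

/-- visits strictly before time `n`. -/
def vc (X : ℕ → ℤ) (n : ℕ) (x : ℤ) : ℕ :=
  ((Finset.range n).filter (fun m => X m = x)).card

/-- right crossings of edge `(x,x+1)` among steps `0..n-1`. -/
def rc (X : ℕ → ℤ) (n : ℕ) (x : ℤ) : ℕ :=
  ((Finset.range n).filter (fun m => X m = x ∧ X (m+1) = x + 1)).card

/-- left crossings of edge `(x,x+1)` among steps `0..n-1`. -/
def lc (X : ℕ → ℤ) (n : ℕ) (x : ℤ) : ℕ :=
  ((Finset.range n).filter (fun m => X m = x + 1 ∧ X (m+1) = x)).card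

/-- number of `-1` arrows among the first `k` arrows at site `x`. -/
def lam (E : ℤ → ℕ → ℤ) (x : ℤ) (k : ℕ) : ℕ :=
  ((Finset.Icc 1 k).filter (fun j => E x j = -1)).card

lemma visits_eq_vc (X : ℕ → ℤ) (n : ℕ) (x : ℤ) : visits X n x = vc X (n+1) x := rfl

lemma vc_succ (X : ℕ → ℤ) (n : ℕ) (x : ℤ) :
    vc X (n+1) x = vc X n x + if X n = x then 1 else 0 := by
  unfold vc
  rw [Finset.range_add_one, Finset.filter_insert]
  split_ifs with h
  · rw [Finset.card_insert_of_notMem (by simp)]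
  · simp

lemma rc_succ (X : ℕ → ℤ) (n : ℕ) (x : ℤ) :
    rc X (n+1) x = rc X n x + if X n = x ∧ X (n+1) = x + 1 then 1 else 0 := by
  unfold rc
  rw [Finset.range_add_one, Finset.filter_insert]
  split_ifs with h
  · rw [Finset.card_insert_of_notMem (by simp)]
  · simp

lemma lc_succ (X : ℕ → ℤ) (n : ℕ) (x : ℤ) :
    lc X (n+1) x = lc X n x + if X n = x + 1 ∧ X (n+1) = x then 1 else 0 := by
  unfold lc
  rw [Finset.range_add_one, Finset.filter_insert]
  split_ifs with h
  · rw [Finset.card_insert_of_notMem (by simp)]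
  · simp

lemma lam_succ (E : ℤ → ℕ → ℤ) (x : ℤ) (k : ℕ) :
    lam E x (k+1) = lam E x k + if E x (k+1) = -1 then 1 else 0 := by
  unfold lam
  rw [show Finset.Icc 1 (k+1) = insert (k+1) (Finset.Icc 1 k) by
        ext j; simp [Nat.lt_succ_iff_lt_or_eq]; omega]
  rw [Finset.filter_insert]
  split_ifs with h
  · rw [Finset.card_insert_of_notMem (by simp)]
  · simp

lemma lam_mono (E : ℤ → ℕ → ℤ) (x : ℤ) {k k' : ℕ} (h : k ≤ k') :
    lam E x k ≤ lam E x k' := by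
  apply Finset.card_le_card
  apply Finset.filter_subset_filter
  exact Finset.Icc_subset_Icc_right h

end Stmt4

namespace Stmt4

variable {E : ℤ → ℕ → ℤ} {X : ℕ → ℤ}

lemma step_dichotomy (hE : IsArrow E) (hX : IsWalk E X) (n : ℕ) :
    X (n+1) = X n + 1 ∨ X (n+1) = X n - 1 := by
  rcases hE (X n) (visits X n (X n)) with h | h <;>
    rw [hX.2 n, h] <;> [left; right] <;> ring

/-- Parity identity: right minus left crossings of edge `(x,x+1)` equals the
change of the indicator of being strictly right of the edge. -/
lemma parity (hE : IsArrow E) (hX : IsWalk E X) (n : ℕ) (x : ℤ) :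
    (rc X n x : ℤ) - (lc X n x : ℤ)
      = (if x < X n then 1 else 0) - (if x < (0:ℤ) then 1 else 0) := by
  induction n with
  | zero => simp [rc, lc, hX.1]
  | succ n ih =>
    rw [rc_succ, lc_succ]
    rcases step_dichotomy hE hX n with h | h <;>
      push_cast <;> rw [h] <;> split_ifs <;> omega

/-- Arrivals: visits before time `n+1` equal crossings into `x` plus the initial visit. -/
lemma arrivals (hE : IsArrow E) (hX : IsWalk E X) (n : ℕ) (x : ℤ) :
    vc X (n+1) x = rc X n (x-1) + lc X n x + if x = 0 then 1 else 0 := by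
  induction n with
  | zero =>
    rw [show (1:ℕ) = 0 + 1 from rfl, vc_succ]
    simp [rc, lc, vc, hX.1, eq_comm]
  | succ n ih =>
    rw [vc_succ, ih, rc_succ, lc_succ]
    have hd := step_dichotomy hE hX n
    have hx1 : x - 1 + 1 = x := by ring
    rw [hx1]
    rcases hd with h | h <;> split_ifs <;> omega

/-- Departures: left crossings of edge `(x-1,x)` before `n` equal the number of
`-1` arrows consumed at `x`. -/
lemma departures (hE : IsArrow E) (hX : IsWalk E X) (n : ℕ) (x : ℤ) :
    lc X n (x-1) = lam E x (vc X n x) := by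
  induction n with
  | zero => simp [lc, vc, lam]
  | succ n ih =>
    rw [lc_succ, vc_succ, ih]
    by_cases hx : X n = x
    · have harrow : X (n+1) = X n + E x (vc X n x + 1) := by
        have := hX.2 n
        rw [visits_eq_vc, vc_succ] at this
        simpa [hx] using this
      rw [if_pos hx, lam_succ]
      rcases hE x (vc X n x + 1) with h | h <;>
        rw [harrow, hx, h] <;> split_ifs <;> first | omega | tauto
    · rw [if_neg hx, if_neg (by rintro ⟨h1, h2⟩; exact hx (by omega)), add_zero, add_zero]

/-- Sum of the first `k` arrows in terms of the count of `-1`s. -/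
lemma sum_eq (hE : IsArrow E) (x : ℤ) (k : ℕ) :
    ∑ j ∈ Finset.Icc 1 k, E x j = (k : ℤ) - 2 * (lam E x k : ℤ) := by
  induction k with
  | zero => simp [lam]
  | succ k ih =>
    rw [Finset.sum_Icc_succ_top (by omega), ih, lam_succ]
    rcases hE x (k+1) with h | h
    · rw [h, if_neg (by norm_num)]; push_cast; ring
    · rw [h, if_pos rfl]; push_cast; ring

lemma lam_le {L R : ℤ → ℕ → ℤ} (hL : IsArrow L) (hR : IsArrow R) (hLR : Prec L R)
    (x : ℤ) (k : ℕ) : lam R x k ≤ lam L x k := by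
  have h := hLR x k
  rw [sum_eq hL, sum_eq hR] at h
  omega

/-- Once the walk stays strictly above `x+1`, the left-crossing count of edge `x`
is frozen. -/
lemma lc_stable (hm : ∀ j ≥ m, x + 1 < X j) {n : ℕ} (hn : m ≤ n) :
    lc X n x = lc X m x := by
  induction n with
  | zero => have : m = 0 := by omega
            subst this; rfl
  | succ n ih =>
    rcases Nat.lt_or_ge m (n+1) with h | h
    · have hmn : m ≤ n := by omega
      rw [lc_succ, ih hmn, if_neg, add_zero]
      rintro ⟨h1, -⟩
      exact absurd h1 (by have := hm n hmn; omega)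
    · have : m = n + 1 := by omega
      subst this; rfl

end Stmt4

namespace Stmt4

lemma key {L R : ℤ → ℕ → ℤ} {XL XR : ℕ → ℤ}
    (hL : IsArrow L) (hR : IsArrow R) (hLR : Prec L R)
    (hXL : IsWalk L XL) (hXR : IsWalk R XR)
    (hLtrans : Tendsto XL atTop atTop) :
    ∀ n : ℕ, ∀ x : ℤ, ∀ m : ℕ, (∀ j ≥ m, x + 1 < XL j) → lc XR n x ≤ lc XL m x := by
  intro n
  induction n with
  | zero => intro x m hm; simp [lc]
  | succ n ih =>
    intro x m hm
    obtain ⟨M₁, hM₁⟩ := Filter.eventually_atTop.mp (hLtrans.eventually_gt_atTop (x+2))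
    set M := max m M₁ with hM
    have hstabx : ∀ j ≥ M, x + 1 < XL j := fun j hj => hm j (le_trans (le_max_left _ _) hj)
    have hstabx1 : ∀ j ≥ M, (x+1) + 1 < XL j := fun j hj => by
      have := hM₁ j (le_trans (le_max_right _ _) hj); omega
    -- Step 1 : bound the number of visits of XR to x+1 before time n+1
    have h2 : vc XR (n+1) (x+1) = rc XR n x + lc XR n (x+1) + if x + 1 = 0 then 1 else 0 := by
      have := arrivals hR hXR n (x+1)
      simpa using this
    have h3 := parity hR hXR n x
    have h4a : lc XR n x ≤ lc XL M x := ih x M hstabx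
    have h4b : lc XR n (x+1) ≤ lc XL M (x+1) := ih (x+1) M hstabx1
    have h5 : vc XL (M+1) (x+1) = rc XL M x + lc XL M (x+1) + if x + 1 = 0 then 1 else 0 := by
      have := arrivals hL hXL M (x+1)
      simpa using this
    have h6 := parity hL hXL M x
    have h6' : x < XL M := by have := hM₁ M (le_max_right _ _); omega
    have h7 : vc XL (M+1) (x+1) = vc XL M (x+1) := by
      rw [vc_succ, if_neg (by have := hM₁ M (le_max_right _ _); omega), add_zero]
    have hk : vc XR (n+1) (x+1) ≤ vc XL M (x+1) := by
      rw [if_pos h6'] at h6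
      split_ifs at h3 h2 h5 <;> omega
    -- Step 2 : conclude via the arrow comparison
    have hd1 : lc XR (n+1) x = lam R (x+1) (vc XR (n+1) (x+1)) := by
      have := departures hR hXR (n+1) (x+1)
      simpa using this
    have hd2 : lc XL M x = lam L (x+1) (vc XL M (x+1)) := by
      have := departures hL hXL M (x+1)
      simpa using this
    calc lc XR (n+1) x = lam R (x+1) (vc XR (n+1) (x+1)) := hd1
      _ ≤ lam R (x+1) (vc XL M (x+1)) := lam_mono R (x+1) hk
      _ ≤ lam L (x+1) (vc XL M (x+1)) := lam_le hL hR hLR _ _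
      _ = lc XL M x := hd2.symm
      _ = lc XL m x := lc_stable hm (le_max_left _ _)

end Stmt4

/-- If L ⪯ R, L → +∞ and R → +∞, then the number of visits of L
to any site x is at least the number of visits of R to x. -/
theorem stmt_4 (L R : ℤ → ℕ → ℤ) (hL : IsArrow L) (hR : IsArrow R) (hLR : Prec L R)
    (XL XR : ℕ → ℤ) (hXL : IsWalk L XL) (hXR : IsWalk R XR)
    (hLtrans : Tendsto XL atTop atTop) (hRtrans : Tendsto XR atTop atTop) :
    ∀ x : ℤ, {n | XR n = x}.ncard ≤ {n | XL n = x}.ncard := by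
  intro x
  obtain ⟨ML, hML⟩ := Filter.eventually_atTop.mp (hLtrans.eventually_gt_atTop (x+2))
  obtain ⟨MR, hMR⟩ := Filter.eventually_atTop.mp (hRtrans.eventually_gt_atTop (x+2))
  set M := max ML MR with hM
  have hML' : ∀ j ≥ M, x + 2 < XL j := fun j hj => hML j (le_trans (le_max_left _ _) hj)
  have hMR' : ∀ j ≥ M, x + 2 < XR j := fun j hj => hMR j (le_trans (le_max_right _ _) hj)
  -- identify the visit sets with finite sets
  have hsetR : {n | XR n = x} = ↑((Finset.range M).filter (fun m => XR m = x)) := by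
    ext n
    simp only [Set.mem_setOf_eq, Finset.coe_filter, Finset.mem_range, Set.mem_setOf_eq]
    constructor
    · intro h
      refine ⟨?_, h⟩
      by_contra hc
      have := hMR' n (by omega)
      omega
    · exact fun h => h.2
  have hsetL : {n | XL n = x} = ↑((Finset.range M).filter (fun m => XL m = x)) := by
    ext n
    simp only [Set.mem_setOf_eq, Finset.coe_filter, Finset.mem_range, Set.mem_setOf_eq]
    constructor
    · intro h
      refine ⟨?_, h⟩
      by_contra hc
      have := hML' n (by omega)
      omega
    · exact fun h => h.2
  rw [hsetR, hsetL, Set.ncard_coe_finset, Set.ncard_coe_finset]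
  show Stmt4.vc XR M x ≤ Stmt4.vc XL M x
  -- freeze at time M+1
  have hfR : Stmt4.vc XR (M+1) x = Stmt4.vc XR M x := by
    rw [Stmt4.vc_succ, if_neg (by have := hMR' M (le_refl M); omega), add_zero]
  have hfL : Stmt4.vc XL (M+1) x = Stmt4.vc XL M x := by
    rw [Stmt4.vc_succ, if_neg (by have := hML' M (le_refl M); omega), add_zero]
  have haR := Stmt4.arrivals hR hXR M x
  have haL := Stmt4.arrivals hL hXL M x
  have hpR := Stmt4.parity hR hXR M (x-1)
  have hpL := Stmt4.parity hL hXL M (x-1)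
  have hxR : x - 1 < XR M := by have := hMR' M (le_refl M); omega
  have hxL : x - 1 < XL M := by have := hML' M (le_refl M); omega
  rw [if_pos hxR] at hpR
  rw [if_pos hxL] at hpL
  have hk1 : Stmt4.lc XR M (x-1) ≤ Stmt4.lc XL M (x-1) :=
    Stmt4.key hL hR hLR hXL hXR hLtrans M (x-1) M (fun j hj => by have := hML' j hj; omega)
  have hk2 : Stmt4.lc XR M x ≤ Stmt4.lc XL M x :=
    Stmt4.key hL hR hLR hXL hXR hLtrans M x M (fun j hj => by have := hML' j hj; omega)
  split_ifs at haR haL hpR hpL <;> omega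
end

section
/- If L ⪯ R are arrow systems, the walk L tends to +∞, and x < y are two consecutive regeneration points of the walk L, then the time for the walk R to go from first hitting x to first hitting y is at most the corresponding time for the walk L: T_R(y) − T_R(x) ≤ T_L(y) − T_L(x), where T_E(z) denotes the first hitting time of z by the walk E. -/
open Filter Topology

namespace Stmt7

/-- visits strictly before time `t`. -/
def V (X : ℕ → ℤ) (t : ℕ) (z : ℤ) : ℕ := ((Finset.range t).filter (fun m => X m = z)).card

def Rd (X : ℕ → ℤ) (t : ℕ) (z : ℤ) : ℕ :=
  ((Finset.range t).filter (fun m => X m = z ∧ X (m+1) = z+1)).card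

def Ld (X : ℕ → ℤ) (t : ℕ) (z : ℤ) : ℕ :=
  ((Finset.range t).filter (fun m => X m = z ∧ X (m+1) = z-1)).card

def rho (E : ℤ → ℕ → ℤ) (z : ℤ) (k : ℕ) : ℕ :=
  ((Finset.Icc 1 k).filter (fun j => E z j = 1)).card

def nu (E : ℤ → ℕ → ℤ) (z : ℤ) (k : ℕ) : ℕ :=
  ((Finset.Icc 1 k).filter (fun j => ¬ E z j = 1)).card

lemma count_succ (p : ℕ → Prop) [DecidablePred p] (t : ℕ) :
    ((Finset.range (t+1)).filter p).card
      = ((Finset.range t).filter p).card + if p t then 1 else 0 := by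
  rw [Finset.range_add_one, Finset.filter_insert]
  split_ifs with h
  · rw [Finset.card_insert_of_notMem (by simp)]
  · simp

lemma V_succ (X : ℕ → ℤ) (t : ℕ) (z : ℤ) :
    V X (t+1) z = V X t z + if X t = z then 1 else 0 := count_succ _ t

lemma Rd_succ (X : ℕ → ℤ) (t : ℕ) (z : ℤ) :
    Rd X (t+1) z = Rd X t z + if X t = z ∧ X (t+1) = z+1 then 1 else 0 := count_succ _ t

lemma Ld_succ (X : ℕ → ℤ) (t : ℕ) (z : ℤ) :
    Ld X (t+1) z = Ld X t z + if X t = z ∧ X (t+1) = z-1 then 1 else 0 := count_succ _ t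

lemma V_mono (X : ℕ → ℤ) (z : ℤ) {s t : ℕ} (h : s ≤ t) : V X s z ≤ V X t z :=
  Finset.card_le_card (Finset.filter_subset_filter _ (by simpa using Finset.range_subset_range.2 h))

lemma icc_succ (k : ℕ) : Finset.Icc 1 (k+1) = insert (k+1) (Finset.Icc 1 k) := by
  ext j; simp [Finset.mem_Icc, Finset.mem_insert]; omega

lemma rho_succ (E : ℤ → ℕ → ℤ) (z : ℤ) (k : ℕ) :
    rho E z (k+1) = rho E z k + if E z (k+1) = 1 then 1 else 0 := by
  unfold rho
  rw [icc_succ, Finset.filter_insert]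
  split_ifs with h
  · rw [Finset.card_insert_of_notMem (by simp)]
  · simp

lemma nu_succ (E : ℤ → ℕ → ℤ) (z : ℤ) (k : ℕ) :
    nu E z (k+1) = nu E z k + if ¬ E z (k+1) = 1 then 1 else 0 := by
  unfold nu
  rw [icc_succ, Finset.filter_insert]
  split_ifs with h
  · simp
  · rw [Finset.card_insert_of_notMem (by simp)]

lemma rho_mono (E : ℤ → ℕ → ℤ) (z : ℤ) {k l : ℕ} (h : k ≤ l) : rho E z k ≤ rho E z l :=
  Finset.card_le_card (Finset.filter_subset_filter _ (Finset.Icc_subset_Icc_right h))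

lemma nu_mono (E : ℤ → ℕ → ℤ) (z : ℤ) {k l : ℕ} (h : k ≤ l) : nu E z k ≤ nu E z l :=
  Finset.card_le_card (Finset.filter_subset_filter _ (Finset.Icc_subset_Icc_right h))

lemma rho_add_nu (E : ℤ → ℕ → ℤ) (z : ℤ) (k : ℕ) : rho E z k + nu E z k = k := by
  unfold rho nu
  rw [Finset.card_filter_add_card_filter_not]
  simp


section Walk
variable {E : ℤ → ℕ → ℤ} {X : ℕ → ℤ}

lemma visits_eq_V (X : ℕ → ℤ) (n : ℕ) (z : ℤ) : visits X n z = V X (n+1) z := rfl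

lemma walk_step (hW : IsWalk E X) (t : ℕ) :
    X (t+1) = X t + E (X t) (V X t (X t) + 1) := by
  have h := hW.2 t
  rw [visits_eq_V, V_succ, if_pos rfl] at h
  exact h

lemma walk_pm (hE : IsArrow E) (hW : IsWalk E X) (t : ℕ) :
    X (t+1) = X t + 1 ∨ X (t+1) = X t - 1 := by
  rcases hE (X t) (V X t (X t) + 1) with h | h <;>
    rw [walk_step hW t, h] <;> [left; right] <;> ring

lemma ivt_aux (hE : IsArrow E) (hW : IsWalk E X) (z : ℤ) :
    ∀ n a, X a ≤ z → z ≤ X (a+n) → ∃ i, a ≤ i ∧ i ≤ a + n ∧ X i = z := by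
  intro n
  induction n with
  | zero => intro a h1 h2; exact ⟨a, le_refl _, le_refl _, le_antisymm h1 h2⟩
  | succ n ih =>
    intro a h1 h2
    by_cases hle : X (a+1) ≤ z
    · obtain ⟨i, hi1, hi2, hi3⟩ := ih (a+1) hle
        (by rw [show a + 1 + n = a + (n+1) by omega]; exact h2)
      exact ⟨i, by omega, by omega, hi3⟩
    · have := walk_pm hE hW a
      exact ⟨a, le_refl _, Nat.le_add_right _ _, by omega⟩

lemma ivt (hE : IsArrow E) (hW : IsWalk E X) {a b : ℕ} {z : ℤ} (hab : a ≤ b)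
    (h1 : X a ≤ z) (h2 : z ≤ X b) : ∃ i, a ≤ i ∧ i ≤ b ∧ X i = z := by
  obtain ⟨n, rfl⟩ := Nat.exists_eq_add_of_le hab
  exact ivt_aux hE hW z n a h1 h2

lemma walk_bound (hE : IsArrow E) (hW : IsWalk E X) : ∀ t : ℕ, -(t:ℤ) ≤ X t ∧ X t ≤ t := by
  intro t
  induction t with
  | zero => rw [hW.1]; simp
  | succ t ih =>
    have := walk_pm hE hW t
    push_cast
    omega

lemma Rd_eq (hE : IsArrow E) (hW : IsWalk E X) (z : ℤ) :
    ∀ t, Rd X t z = rho E z (V X t z) := by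
  intro t
  induction t with
  | zero => simp [Rd, V, rho]
  | succ t ih =>
    rw [Rd_succ, V_succ]
    by_cases h : X t = z
    · rw [if_pos h, rho_succ]
      have hs := walk_step hW t
      rw [h] at hs
      rcases hE z (V X t z + 1) with he | he <;> rw [he] at hs
      · rw [if_pos ⟨h, hs⟩, if_pos he, ih]
      · rw [if_neg (fun hc => by rw [hs] at hc; omega : ¬(X t = z ∧ X (t+1) = z+1)),
            if_neg (by rw [he]; omega), ih]
    · rw [if_neg h, if_neg (by tauto), ih]
      simp

lemma Ld_eq (hE : IsArrow E) (hW : IsWalk E X) (z : ℤ) :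
    ∀ t, Ld X t z = nu E z (V X t z) := by
  intro t
  induction t with
  | zero => simp [Ld, V, nu]
  | succ t ih =>
    rw [Ld_succ, V_succ]
    by_cases h : X t = z
    · rw [if_pos h, nu_succ]
      have hs := walk_step hW t
      rw [h] at hs
      rcases hE z (V X t z + 1) with he | he <;> rw [he] at hs
      · rw [if_neg (fun hc => by rw [hs] at hc; omega : ¬(X t = z ∧ X (t+1) = z-1)),
            if_neg (not_not_intro he), ih]
      · rw [if_pos ⟨h, by rw [hs]; ring⟩, if_pos (by rw [he]; omega), ih]
    · rw [if_neg h, if_neg (by tauto), ih]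
      simp

lemma crossing (hE : IsArrow E) (hW : IsWalk E X) (z : ℤ) :
    ∀ t, (Rd X t z : ℤ) - (Ld X t (z+1) : ℤ)
      = (if z < X t then 1 else 0) - (if z < 0 then 1 else 0) := by
  intro t
  induction t with
  | zero => simp [Rd, Ld, hW.1]
  | succ t ih =>
    rw [Rd_succ, Ld_succ]
    rcases walk_pm hE hW t with h | h <;>
    · push_cast
      split_ifs at ih ⊢ <;> omega


lemma flow (hE : IsArrow E) (hW : IsWalk E X) {w : ℤ} {T : ℕ} (hT : FirstHit X w T) (z : ℤ) :
    (rho E z (V X T z) : ℤ) - (nu E (z+1) (V X T (z+1)) : ℤ)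
      = (if z < w then 1 else 0) - (if z < 0 then 1 else 0) := by
  have h := crossing hE hW z T
  rw [Rd_eq hE hW z T, Ld_eq hE hW (z+1) T, hT.1] at h
  exact h

lemma lt_of_before_hit (hE : IsArrow E) (hW : IsWalk E X) {w : ℤ} {T : ℕ}
    (hT : FirstHit X w T) (hw : 0 ≤ w) {i : ℕ} (hi : i < T) : X i < w := by
  by_contra h
  push_neg at h
  obtain ⟨j, _, hj2, hj3⟩ := ivt hE hW (Nat.zero_le i) (by rw [hW.1]; exact hw) h
  exact hT.2 j (lt_of_le_of_lt hj2 hi) hj3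

lemma V_hit_zero (hE : IsArrow E) (hW : IsWalk E X) {w : ℤ} {T : ℕ}
    (hT : FirstHit X w T) (hw : 0 ≤ w) {z : ℤ} (hz : w ≤ z) : V X T z = 0 := by
  unfold V
  rw [Finset.card_eq_zero, Finset.filter_eq_empty_iff]
  intro m hm
  rw [Finset.mem_range] at hm
  have := lt_of_before_hit hE hW hT hw hm
  intro hc; omega

lemma last_right (hE : IsArrow E) (hW : IsWalk E X) {w : ℤ} {T : ℕ}
    (hT : FirstHit X w T) (hw : 0 ≤ w) {z : ℤ} (hv : 0 < V X T z) :
    E z (V X T z) = 1 := by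
  classical
  set S := (Finset.range T).filter (fun m => X m = z) with hS
  have hne : S.Nonempty := Finset.card_pos.mp hv
  set i := S.max' hne with hi
  have hiS : i ∈ S := S.max'_mem hne
  rw [hS, Finset.mem_filter, Finset.mem_range] at hiS
  obtain ⟨hi_lt, hXi⟩ := hiS
  have hVi : V X T z = V X i z + 1 := by
    rw [show V X i z + 1 = V X (i+1) z by rw [V_succ, if_pos hXi]]
    apply le_antisymm
    · apply Finset.card_le_card
      intro m hm
      rw [Finset.mem_filter, Finset.mem_range] at hm ⊢
      refine ⟨?_, hm.2⟩
      have : m ≤ i := S.le_max' m (by rw [hS, Finset.mem_filter, Finset.mem_range]; exact hm)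
      omega
    · exact V_mono _ _ (by omega)
  rcases hE z (V X T z) with h1 | h1
  · exact h1
  · exfalso
    have hs := walk_step hW i
    rw [hXi] at hs
    rw [← hVi] at hs
    rw [h1] at hs
    have hzw : z < w := by
      have := lt_of_before_hit hE hW hT hw hi_lt
      omega
    obtain ⟨j, hj1, hj2, hj3⟩ := ivt (z := z) hE hW (show i+1 ≤ T by omega)
      (by rw [hs]; omega) (by rw [hT.1]; omega)
    have hjT : j < T := by
      rcases Nat.lt_or_ge j T with h | h
      · exact h
      · exfalso; have : j = T := by omega
        rw [this, hT.1] at hj3; omega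
    have : j ≤ i := S.le_max' j (by rw [hS, Finset.mem_filter, Finset.mem_range]; exact ⟨hjT, hj3⟩)
    omega

lemma V_total (X : ℕ → ℤ) :
    ∀ (t : ℕ) (I : Finset ℤ), (∀ i, i < t → X i ∈ I) → ∑ z ∈ I, V X t z = t := by
  intro t
  induction t with
  | zero => intro I _; simp [V]
  | succ t ih =>
    intro I hI
    have h1 : ∀ z ∈ I, V X (t+1) z = V X t z + if X t = z then 1 else 0 :=
      fun z _ => V_succ X t z
    rw [Finset.sum_congr rfl h1, Finset.sum_add_distrib, ih I (fun i hi => hI i (by omega))]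
    have h2 : ∑ z ∈ I, (if X t = z then 1 else 0) = 1 := by
      rw [Finset.sum_ite_eq I (X t) (fun _ => 1), if_pos (hI t (by omega))]
    omega

lemma sum_eq_rho (hE : IsArrow E) (z : ℤ) (k : ℕ) :
    ∑ j ∈ Finset.Icc 1 k, E z j = 2 * (rho E z k : ℤ) - k := by
  induction k with
  | zero => simp [rho]
  | succ k ih =>
    rw [icc_succ, Finset.sum_insert (by simp), ih, rho_succ]
    rcases hE z (k+1) with h | h <;> rw [h] <;> push_cast <;> omega

lemma rho_le_rho {L' R' : ℤ → ℕ → ℤ} (hL : IsArrow L') (hR : IsArrow R') (hLR : Prec L' R')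
    (z : ℤ) (k : ℕ) : rho L' z k ≤ rho R' z k := by
  have h := hLR z k
  rw [sum_eq_rho hL, sum_eq_rho hR] at h
  omega

lemma nu_le_nu {L' R' : ℤ → ℕ → ℤ} (hL : IsArrow L') (hR : IsArrow R') (hLR : Prec L' R')
    (z : ℤ) (k : ℕ) : nu R' z k ≤ nu L' z k := by
  have h := rho_le_rho hL hR hLR z k
  have h1 := rho_add_nu L' z k
  have h2 := rho_add_nu R' z k
  omega

end Walk

lemma part1 {L R : ℤ → ℕ → ℤ} {XL XR : ℕ → ℤ} (hL : IsArrow L) (hR : IsArrow R)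
    (hLR : Prec L R) (hXL : IsWalk L XL) (hXR : IsWalk R XR)
    {y : ℤ} (hy0 : 0 ≤ y) {TLy TRy : ℕ} (hTLy : FirstHit XL y TLy) (hTRy : FirstHit XR y TRy) :
    ∀ z : ℤ, (nu R z (V XR TRy z) ≤ nu L z (V XL TLy z)) ∧ V XR TRy z ≤ V XL TLy z := by
  have key : ∀ n : ℕ, ∀ z : ℤ, z = y - n →
      (nu R z (V XR TRy z) ≤ nu L z (V XL TLy z)) ∧ V XR TRy z ≤ V XL TLy z := by
    intro n
    induction n with
    | zero =>
      intro z hz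
      have h1 : V XR TRy z = 0 := V_hit_zero hR hXR hTRy hy0 (by omega)
      have h2 : V XL TLy z = 0 := V_hit_zero hL hXL hTLy hy0 (by omega)
      rw [h1, h2]
      exact ⟨le_refl _, le_refl _⟩
    | succ n ih =>
      intro z hz
      have hz1 : z + 1 = y - n := by push_cast at hz ⊢; omega
      obtain ⟨ihnu, _⟩ := ih (z+1) hz1
      have fL := flow hL hXL hTLy z
      have fR := flow hR hXR hTRy z
      have hr : rho R z (V XR TRy z) ≤ rho L z (V XL TLy z) := by
        split_ifs at fL fR <;> omega
      have hv : V XR TRy z ≤ V XL TLy z := by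
        by_contra hc
        push_neg at hc
        have hpos : 0 < V XR TRy z := by omega
        have hlast := last_right hR hXR hTRy hy0 hpos
        have e1 : rho R z (V XR TRy z) = rho R z (V XR TRy z - 1) + 1 := by
          have h := rho_succ R z (V XR TRy z - 1)
          rw [show V XR TRy z - 1 + 1 = V XR TRy z by omega] at h
          rw [h, if_pos hlast]
        have e2 : rho R z (V XL TLy z) ≤ rho R z (V XR TRy z - 1) := rho_mono _ _ (by omega)
        have e3 : rho L z (V XL TLy z) ≤ rho R z (V XL TLy z) := rho_le_rho hL hR hLR z _
        omega
      refine ⟨?_, hv⟩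
      calc nu R z (V XR TRy z) ≤ nu R z (V XL TLy z) := nu_mono _ _ hv
        _ ≤ nu L z (V XL TLy z) := nu_le_nu hL hR hLR z _
  intro z
  rcases le_or_gt z y with h | h
  · exact key (y - z).toNat z (by omega)
  · have h1 : V XR TRy z = 0 := V_hit_zero hR hXR hTRy hy0 (by omega)
    have h2 : V XL TLy z = 0 := V_hit_zero hL hXL hTLy hy0 (by omega)
    rw [h1, h2]
    exact ⟨le_refl _, le_refl _⟩

lemma part2 {R : ℤ → ℕ → ℤ} {XR : ℕ → ℤ} (hR : IsArrow R) (hXR : IsWalk R XR)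
    {x y : ℤ} (hx0 : 0 ≤ x) (hxy : x < y) {TRx TRy : ℕ}
    (hTRx : FirstHit XR x TRx) (hTRy : FirstHit XR y TRy) (hTT : TRx ≤ TRy)
    (hnux : nu R x (V XR TRy x) = 0) :
    ∀ z : ℤ, z < x → V XR TRy z = V XR TRx z := by
  have hy0 : 0 ≤ y := by omega
  have key : ∀ n : ℕ, ∀ z : ℤ, z = x - n →
      (nu R z (V XR TRy z) = nu R z (V XR TRx z)) ∧ (0 < n → V XR TRy z = V XR TRx z) := by
    intro n
    induction n with
    | zero =>
      intro z hz
      have hz' : z = x := by push_cast at hz; omega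
      subst hz'
      have h0 : V XR TRx z = 0 := V_hit_zero hR hXR hTRx hx0 (le_refl _)
      refine ⟨?_, fun h => absurd h (lt_irrefl 0)⟩
      rw [h0, hnux]
      simp [nu]
    | succ n ih =>
      intro z hz
      have hzlt : z < x := by push_cast at hz; omega
      have hz1 : z + 1 = x - n := by push_cast at hz ⊢; omega
      obtain ⟨ihnu, _⟩ := ih (z+1) hz1
      have fy := flow hR hXR hTRy z
      have fx := flow hR hXR hTRx z
      have hr : rho R z (V XR TRy z) = rho R z (V XR TRx z) := by
        split_ifs at fy fx <;> omega
      have hvle : V XR TRx z ≤ V XR TRy z := V_mono _ _ hTT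
      have hv : V XR TRy z = V XR TRx z := by
        by_contra hc
        have hpos : 0 < V XR TRy z := by omega
        have hlast := last_right hR hXR hTRy hy0 hpos
        have e1 : rho R z (V XR TRy z) = rho R z (V XR TRy z - 1) + 1 := by
          have h := rho_succ R z (V XR TRy z - 1)
          rw [show V XR TRy z - 1 + 1 = V XR TRy z by omega] at h
          rw [h, if_pos hlast]
        have e2 : rho R z (V XR TRx z) ≤ rho R z (V XR TRy z - 1) := rho_mono _ _ (by omega)
        omega
      exact ⟨by rw [hv], fun _ => hv⟩
  intro z hzx
  exact (key (x - z).toNat z (by omega)).2 (by omega)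

end Stmt7

open Stmt7 in
/-- If L ⪯ R, L → +∞ and x < y are consecutive regeneration points
of L, then T_R(y) − T_R(x) ≤ T_L(y) − T_L(x). -/
theorem stmt_7 (L R : ℤ → ℕ → ℤ) (hL : IsArrow L) (hR : IsArrow R) (hLR : Prec L R)
    (XL XR : ℕ → ℤ) (hXL : IsWalk L XL) (hXR : IsWalk R XR)
    (hLtrans : Tendsto XL atTop atTop)
    (x y : ℤ) (hx : Regen XL x) (hy : Regen XL y) (hxy : x < y)
    (hconsec : ∀ z : ℤ, x < z → z < y → ¬ Regen XL z)
    (TLx TLy TRx TRy : ℕ)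
    (hTLx : FirstHit XL x TLx) (hTLy : FirstHit XL y TLy)
    (hTRx : FirstHit XR x TRx) (hTRy : FirstHit XR y TRy) :
    TRy - TRx ≤ TLy - TLx := by
  classical
  obtain ⟨hx0, Tr, hTr, hreg⟩ := hx
  have hy0 : 0 ≤ y := by omega
  have hTreq : Tr = TLx := by
    rcases Nat.lt_trichotomy Tr TLx with h | h | h
    · exact absurd hTr.1 (hTLx.2 Tr h)
    · exact h
    · exact absurd hTLx.1 (hTr.2 TLx h)
  rw [hTreq] at hreg
  have hTxyL : TLx ≤ TLy := by
    obtain ⟨i, _, hi2, hi3⟩ := ivt (z := x) hL hXL (Nat.zero_le TLy)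
      (by rw [hXL.1]; exact hx0) (by rw [hTLy.1]; omega)
    have : TLx ≤ i := by
      by_contra hc
      push_neg at hc
      exact hTLx.2 i hc hi3
    omega
  have hTxyR : TRx ≤ TRy := by
    obtain ⟨i, _, hi2, hi3⟩ := ivt (z := x) hR hXR (Nat.zero_le TRy)
      (by rw [hXR.1]; exact hx0) (by rw [hTRy.1]; omega)
    have : TRx ≤ i := by
      by_contra hc
      push_neg at hc
      exact hTRx.2 i hc hi3
    omega
  have hnuLx : nu L x (V XL TLy x) = 0 := by
    rw [← Ld_eq hL hXL x TLy]
    unfold Ld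
    rw [Finset.card_eq_zero, Finset.filter_eq_empty_iff]
    intro m hm
    rw [Finset.mem_range] at hm
    rintro ⟨h1, h2⟩
    have hm1 : TLx ≤ m := by
      by_contra hc
      push_neg at hc
      exact hTLx.2 m hc h1
    have := hreg (m+1) (by omega)
    omega
  have hP1 := part1 hL hR hLR hXL hXR hy0 hTLy hTRy
  have hnuRx : nu R x (V XR TRy x) = 0 := by
    have h1 : nu R x (V XR TRy x) ≤ nu R x (V XL TLy x) := nu_mono _ _ (hP1 x).2
    have h2 : nu R x (V XL TLy x) ≤ nu L x (V XL TLy x) := nu_le_nu hL hR hLR x _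
    omega
  have hP2 := part2 hR hXR hx0 hxy hTRx hTRy hTxyR hnuRx
  set N : ℕ := max TLy TRy with hN
  set I : Finset ℤ := Finset.Icc (-(N:ℤ)) (N:ℤ) with hI
  have hmemL : ∀ i, i < TLy → XL i ∈ I := by
    intro i hi
    have := walk_bound hL hXL i
    rw [hI, Finset.mem_Icc]
    have : (i:ℤ) < N := by push_cast; omega
    omega
  have hmemR : ∀ i, i < TRy → XR i ∈ I := by
    intro i hi
    have := walk_bound hR hXR i
    rw [hI, Finset.mem_Icc]
    have : (i:ℤ) < N := by push_cast; omega
    omega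
  have sLy := V_total XL TLy I hmemL
  have sLx := V_total XL TLx I (fun i hi => hmemL i (by omega))
  have sRy := V_total XR TRy I hmemR
  have sRx := V_total XR TRx I (fun i hi => hmemR i (by omega))
  have hkey : ∀ z ∈ I, V XR TRy z - V XR TRx z ≤ V XL TLy z - V XL TLx z := by
    intro z _
    rcases lt_or_ge z x with h | h
    · rw [hP2 z h]
      omega
    · have h1 : V XR TRx z = 0 := V_hit_zero hR hXR hTRx hx0 h
      have h2 : V XL TLx z = 0 := V_hit_zero hL hXL hTLx hx0 h
      have h3 := (hP1 z).2
      omega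
  have e1 : ∑ z ∈ I, V XR TRy z
      = ∑ z ∈ I, V XR TRx z + ∑ z ∈ I, (V XR TRy z - V XR TRx z) := by
    rw [← Finset.sum_add_distrib]
    apply Finset.sum_congr rfl
    intro z _
    have := V_mono XR z hTxyR
    omega
  have e2 : ∑ z ∈ I, V XL TLy z
      = ∑ z ∈ I, V XL TLx z + ∑ z ∈ I, (V XL TLy z - V XL TLx z) := by
    rw [← Finset.sum_add_distrib]
    apply Finset.sum_congr rfl
    intro z _
    have := V_mono XL z hTxyL
    omega
  have hsum : ∑ z ∈ I, (V XR TRy z - V XR TRx z) ≤ ∑ z ∈ I, (V XL TLy z - V XL TLx z) :=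
    Finset.sum_le_sum hkey
  rw [sLy, sLx] at e2
  rw [sRy, sRx] at e1
  omega
end

section
/- If L ⪯ R are arrow systems and the walk L is transient to the right (L_n → +∞), then the walk R is also transient to the right (R_n → +∞). -/
open Filter Topology

/-- departures: number of m < n with X m = y -/
def dep (X : ℕ → ℤ) (y : ℤ) (n : ℕ) : ℕ :=
  ((Finset.range n).filter (fun m => X m = y)).card

def upC (X : ℕ → ℤ) (x : ℤ) (n : ℕ) : ℕ :=
  ((Finset.range n).filter (fun m => X m = x ∧ X (m+1) = x + 1)).card

def dnC (X : ℕ → ℤ) (x : ℤ) (n : ℕ) : ℕ :=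
  ((Finset.range n).filter (fun m => X m = x + 1 ∧ X (m+1) = x)).card

def negC (E : ℤ → ℕ → ℤ) (y : ℤ) (k : ℕ) : ℕ :=
  ((Finset.Icc 1 k).filter (fun j => E y j = -1)).card

lemma card_filter_succ (p : ℕ → Prop) [DecidablePred p] (n : ℕ) :
    ((Finset.range (n+1)).filter p).card
      = ((Finset.range n).filter p).card + if p n then 1 else 0 := by
  rw [Finset.range_add_one, Finset.filter_insert]
  split_ifs with h
  · rw [Finset.card_insert_of_notMem (by simp)]
  · simp

lemma visits_eq_dep_s8 (X : ℕ → ℤ) (n : ℕ) (y : ℤ) : visits X n y = dep X y (n+1) := rfl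

lemma dep_succ (X : ℕ → ℤ) (y : ℤ) (n : ℕ) :
    dep X y (n+1) = dep X y n + if X n = y then 1 else 0 := card_filter_succ _ n

lemma upC_succ (X : ℕ → ℤ) (x : ℤ) (n : ℕ) :
    upC X x n.succ = upC X x n + if (X n = x ∧ X (n+1) = x + 1) then 1 else 0 := card_filter_succ _ n

lemma dnC_succ (X : ℕ → ℤ) (x : ℤ) (n : ℕ) :
    dnC X x n.succ = dnC X x n + if (X n = x + 1 ∧ X (n+1) = x) then 1 else 0 := card_filter_succ _ n

lemma negC_succ (E : ℤ → ℕ → ℤ) (y : ℤ) (k : ℕ) :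
    negC E y (k+1) = negC E y k + if E y (k+1) = -1 then 1 else 0 := by
  unfold negC
  rw [← Finset.insert_Icc_right_eq_Icc_add_one (by omega), Finset.filter_insert]
  split_ifs with h
  · rw [Finset.card_insert_of_notMem (by simp)]
  · simp

lemma negC_mono (E : ℤ → ℕ → ℤ) (y : ℤ) {k l : ℕ} (h : k ≤ l) : negC E y k ≤ negC E y l :=
  Finset.card_le_card (Finset.filter_subset_filter _ (Finset.Icc_subset_Icc_right h))

lemma dep_mono (X : ℕ → ℤ) (y : ℤ) {m n : ℕ} (h : m ≤ n) : dep X y m ≤ dep X y n :=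
  Finset.card_le_card (Finset.filter_subset_filter _ (Finset.range_subset_range.2 h))

lemma sum_eq_negC {E : ℤ → ℕ → ℤ} (hE : IsArrow E) (y : ℤ) (k : ℕ) :
    ∑ j ∈ Finset.Icc 1 k, E y j = (k : ℤ) - 2 * negC E y k := by
  induction k with
  | zero => simp [negC]
  | succ k ih =>
    rw [← Finset.insert_Icc_right_eq_Icc_add_one (by omega : 1 ≤ k + 1), Finset.sum_insert (by simp), ih, negC_succ]
    rcases hE y (k+1) with h | h <;> simp [h] <;> push_cast <;> omega

lemma negC_le {L R : ℤ → ℕ → ℤ} (hL : IsArrow L) (hR : IsArrow R) (hLR : Prec L R)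
    (y : ℤ) (k : ℕ) : negC R y k ≤ negC L y k := by
  have h := hLR y k
  rw [sum_eq_negC hL, sum_eq_negC hR] at h
  omega

lemma walk_step {E : ℤ → ℕ → ℤ} {X : ℕ → ℤ} (hE : IsArrow E) (hW : IsWalk E X) (n : ℕ) :
    X (n+1) = X n + 1 ∨ X (n+1) = X n - 1 := by
  rcases hE (X n) (visits X n (X n)) with h | h <;>
    [left; right] <;> rw [hW.2 n, h] <;> ring

lemma dnC_eq {E : ℤ → ℕ → ℤ} {X : ℕ → ℤ} (hE : IsArrow E) (hW : IsWalk E X) (x : ℤ) :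
    ∀ n, dnC X x n = negC E (x+1) (dep X (x+1) n) := by
  intro n
  induction n with
  | zero => simp [dnC, dep, negC]
  | succ n ih =>
    rw [dnC_succ, dep_succ, ih]
    by_cases h : X n = x + 1
    · rw [if_pos h]
      have hv : visits X n (x+1) = dep X (x+1) n + 1 := by
        rw [visits_eq_dep_s8, dep_succ, if_pos h]
      have hx : X (n+1) = (x+1) + E (x+1) (dep X (x+1) n + 1) := by
        have := hW.2 n
        rw [h] at this
        rw [this, hv]
      rw [negC_succ]
      rcases hE (x+1) (dep X (x+1) n + 1) with ha | ha <;> rw [ha] at hx <;>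
        · congr 1
          split_ifs with h1 h2 <;> first | rfl | omega | (exfalso; rcases h1 with ⟨h1a,h1b⟩; omega) |
            (exfalso; exact h1 ⟨h, by omega⟩)
    · rw [if_neg h, if_neg (fun hc => h hc.1)]
      simp

lemma cross_id {E : ℤ → ℕ → ℤ} {X : ℕ → ℤ} (hE : IsArrow E) (hW : IsWalk E X) (x : ℤ) :
    ∀ n, (upC X x n : ℤ) + (if x < 0 then 1 else 0)
        = (dnC X x n : ℤ) + (if x < X n then 1 else 0) := by
  intro n
  induction n with
  | zero => rw [hW.1]; simp [upC, dnC]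
  | succ n ih =>
    rw [upC_succ, dnC_succ]
    push_cast
    rcases walk_step hE hW n with hs | hs <;> rw [hs] at * <;> split_ifs at * <;> omega

lemma dep_decomp {E : ℤ → ℕ → ℤ} {X : ℕ → ℤ} (hE : IsArrow E) (hW : IsWalk E X) (y : ℤ) :
    ∀ n, (dep X y (n+1) : ℤ)
        = (if y = 0 then 1 else 0) + upC X (y-1) n + dnC X y n := by
  intro n
  induction n with
  | zero =>
    rw [dep_succ]
    have h0 : X 0 = 0 := hW.1
    simp only [dep, upC, dnC, Finset.range_zero, Finset.filter_empty, Finset.card_empty, h0]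
    push_cast
    split_ifs <;> omega
  | succ n ih =>
    rw [dep_succ, upC_succ, dnC_succ]
    push_cast at ih ⊢
    have hy : (y - 1) + 1 = y := by ring
    rcases walk_step hE hW n with hs | hs <;> rw [hs] at * <;> split_ifs at * <;> omega


/-- If L ⪯ R and L is transient to the right then so is R. -/
theorem stmt_8 (L R : ℤ → ℕ → ℤ) (hL : IsArrow L) (hR : IsArrow R) (hLR : Prec L R)
    (XL XR : ℕ → ℤ) (hXL : IsWalk L XL) (hXR : IsWalk R XR)
    (hLtrans : Tendsto XL atTop atTop) :
    Tendsto XR atTop atTop := by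
  -- stabilization times for XL
  have hNex : ∀ y : ℤ, ∃ N : ℕ, ∀ n ≥ N, y < XL n := by
    intro y
    exact (hLtrans.eventually_gt_atTop y).exists_forall_of_atTop
  choose N hN using hNex
  -- total visit counts of XL
  set V : ℤ → ℕ := fun y => dep XL y (N y) with hV
  have hVeq : ∀ y : ℤ, ∀ n, N y ≤ n → dep XL y n = V y := by
    intro y n hn
    induction n, hn using Nat.le_induction with
    | base => rfl
    | succ n hn ih =>
      rw [dep_succ, ih, if_neg (by have := hN y n hn; omega)]
      omega
  have hVle : ∀ (y : ℤ) (n : ℕ), dep XL y n ≤ V y := by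
    intro y n
    rcases le_total n (N y) with h | h
    · exact dep_mono XL y h
    · rw [hVeq y n h]
  -- edge budgets
  set C : ℤ → ℕ := fun x => negC L (x+1) (V (x+1)) with hC
  -- the key identity for L totals
  have keyV : ∀ x : ℤ, (V (x+1) : ℤ)
      = (if (x+1 : ℤ) = 0 then 1 else 0) + ((C x : ℤ) + 1 - (if x < 0 then 1 else 0))
        + C (x+1) := by
    intro x
    set n := max (N x) (max (N (x+1)) (N (x+2))) with hn
    have hnx : N x ≤ n := le_max_left _ _
    have hnx1 : N (x+1) ≤ n := le_trans (le_max_left _ _) (le_max_right _ _)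
    have hnx2 : N (x+2) ≤ n := le_trans (le_max_right _ _) (le_max_right _ _)
    have h1 : dep XL (x+1) (n+1) = V (x+1) := hVeq _ _ (by omega)
    have h2 := dep_decomp hL hXL (x+1) n
    have h3 := cross_id hL hXL x n
    have h4 : dnC XL x n = C x := by
      rw [dnC_eq hL hXL, hVeq _ _ hnx1]
    have h5 : dnC XL (x+1) n = C (x+1) := by
      rw [dnC_eq hL hXL]
      have hxx : (x+1)+1 = x+2 := by ring
      rw [hxx, hVeq _ _ hnx2]
      show _ = negC L ((x+1)+1) (V ((x+1)+1))
      rw [hxx]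
    have h6 : (x+1) - 1 = x := by ring
    rw [h1, h6, h5] at h2
    have h7 : x < XL n := hN x n hnx
    rw [if_pos h7, h4] at h3
    omega
  -- Lemma A: down-crossing budgets for XR
  have dnA : ∀ (n : ℕ) (x : ℤ), dnC XR x n ≤ C x := by
    intro n
    induction n with
    | zero => intro x; simp [dnC]
    | succ n ih =>
      intro x
      rw [dnC_succ]
      by_cases hc : XR n = x + 1 ∧ XR (n+1) = x
      · rw [if_pos hc]
        set d := dep XR (x+1) n with hd
        have hdep1 : dep XR (x+1) (n+1) = d + 1 := by
          rw [dep_succ, if_pos hc.1]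
        have hv : visits XR n (x+1) = d + 1 := by
          rw [visits_eq_dep_s8, hdep1]
        have harr : R (x+1) (d+1) = -1 := by
          have hw := hXR.2 n
          rw [hc.1] at hw
          rw [hv, hc.2] at hw
          omega
        have hdd : d + 1 ≤ V (x+1) := by
          have e1 := dep_decomp hR hXR (x+1) n
          have h6 : (x+1) - 1 = x := by ring
          rw [hdep1, h6] at e1
          have e2 := cross_id hR hXR x n
          have h7 : x < XR n := by rw [hc.1]; omega
          rw [if_pos h7] at e2
          have e3 : dnC XR x n ≤ C x := ih x
          have e4 : dnC XR (x+1) n ≤ C (x+1) := ih (x+1)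
          have e5 := keyV x
          omega
        have hstep1 : dnC XR x n + 1 = negC R (x+1) (d+1) := by
          rw [dnC_eq hR hXR, negC_succ, if_pos harr]
        rw [hstep1]
        calc negC R (x+1) (d+1) ≤ negC L (x+1) (d+1) := negC_le hL hR hLR _ _
          _ ≤ negC L (x+1) (V (x+1)) := negC_mono _ _ hdd
          _ = C x := rfl
      · rw [if_neg hc]
        simpa using ih x
  -- visit bounds for XR
  have depBnd : ∀ (y : ℤ) (n : ℕ), dep XR y n ≤ C (y-1) + C y + 2 := by
    intro y n
    cases n with
    | zero => simp [dep]
    | succ n =>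
      have e1 := dep_decomp hR hXR y n
      have e2 := cross_id hR hXR (y-1) n
      have e3 : dnC XR (y-1) n ≤ C (y-1) := dnA n (y-1)
      have e4 : dnC XR y n ≤ C y := dnA n y
      split_ifs at e1 e2 <;> omega
  -- XL is bounded below
  obtain ⟨N0, hN0⟩ : ∃ N0 : ℕ, ∀ n ≥ N0, (0:ℤ) ≤ XL n :=
    (hLtrans.eventually_ge_atTop 0).exists_forall_of_atTop
  set F : Finset ℤ := insert (0:ℤ) ((Finset.range (N0+1)).image XL) with hF
  have hFne : F.Nonempty := ⟨0, Finset.mem_insert_self _ _⟩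
  set c : ℤ := F.min' hFne with hc
  have hc0 : c ≤ 0 := Finset.min'_le _ _ (Finset.mem_insert_self _ _)
  have hcle : ∀ n, c ≤ XL n := by
    intro n
    rcases le_or_gt n N0 with h | h
    · exact Finset.min'_le _ _ (Finset.mem_insert_of_mem
        (Finset.mem_image_of_mem XL (Finset.mem_range.2 (by omega))))
    · exact le_trans hc0 (hN0 n (by omega))
  have hVzero : ∀ y : ℤ, y < c → V y = 0 := by
    intro y hy
    rw [hV]
    simp only
    rw [dep, Finset.card_eq_zero, Finset.filter_eq_empty_iff]
    intro m _
    have := hcle m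
    omega
  have hCzero : ∀ x : ℤ, x + 1 < c → C x = 0 := by
    intro x hx
    rw [hC]
    simp only
    rw [hVzero (x+1) hx]
    simp [negC]
  -- XR is bounded below by c - 1
  have hlow : ∀ n, c - 1 ≤ XR n := by
    intro n
    induction n with
    | zero => rw [hXR.1]; omega
    | succ n ih =>
      rcases walk_step hR hXR n with hs | hs
      · omega
      · by_contra hcon
        have hx1 : XR n = c - 1 := by omega
        have hx2 : XR (n+1) = c - 2 := by omega
        have h1 : dnC XR (c-2) (n+1) ≤ C (c-2) := dnA (n+1) (c-2)
        have h2 : C (c-2) = 0 := hCzero _ (by omega)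
        have h3 : 1 ≤ dnC XR (c-2) (n+1) := by
          rw [dnC_succ, if_pos ⟨by omega, by omega⟩]
          omega
        omega
  -- each site is visited finitely often by XR
  have hfin : ∀ y : ℤ, {m : ℕ | XR m = y}.Finite := by
    intro y
    by_contra h
    have hinf : {m : ℕ | XR m = y}.Infinite := h
    obtain ⟨t, hts, htc⟩ := hinf.exists_subset_card_eq (C (y-1) + C y + 3)
    have htne : t.Nonempty := Finset.card_pos.1 (by omega)
    set n := t.max' htne with hn
    have hsub : t ⊆ (Finset.range (n+1)).filter (fun m => XR m = y) := by
      intro m hm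
      rw [Finset.mem_filter, Finset.mem_range]
      exact ⟨by have := Finset.le_max' t m hm; omega, hts hm⟩
    have := Finset.card_le_card hsub
    rw [htc] at this
    have := depBnd y (n+1)
    rw [dep] at this
    omega
  -- conclude
  rw [tendsto_atTop]
  intro b
  rw [eventually_atTop]
  have hTfin : {m : ℕ | XR m < b}.Finite := by
    apply Set.Finite.subset (Set.Finite.biUnion (Finset.Icc (c-1) (b-1)).finite_toSet
      (fun y _ => hfin y))
    intro m hm
    simp only [Set.mem_setOf_eq] at hm
    refine Set.mem_biUnion (s := (Finset.Icc (c-1) (b-1) : Set ℤ)) ?_ rfl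
    simp only [Finset.coe_Icc, Set.mem_Icc]
    exact ⟨hlow m, by omega⟩
  obtain ⟨M, hM⟩ := hTfin.bddAbove
  refine ⟨M+1, fun n hn => ?_⟩
  by_contra hcon
  have : n ∈ {m : ℕ | XR m < b} := by simp only [Set.mem_setOf_eq]; omega
  have := hM this
  omega
end

section
/- If L ⪯ R are arrow systems and both walks have asymptotic speeds v_L = lim L_n/n and v_R = lim R_n/n, with v_L > 0, then v_L ≤ v_R. -/
open Filter Topology

namespace Stmt9
def cntR (X : ℕ → ℤ) (z : ℤ) (n : ℕ) : ℕ :=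
  ((Finset.range n).filter (fun m => X m = z ∧ X (m+1) = z + 1)).card
def cntL (X : ℕ → ℤ) (z : ℤ) (n : ℕ) : ℕ :=
  ((Finset.range n).filter (fun m => X m = z + 1 ∧ X (m+1) = z)).card
def dep (X : ℕ → ℤ) (z : ℤ) (n : ℕ) : ℕ :=
  ((Finset.range n).filter (fun m => X m = z)).card
def rcnt (E : ℤ → ℕ → ℤ) (z : ℤ) (k : ℕ) : ℕ :=
  ((Finset.Icc 1 k).filter (fun j => E z j = 1)).card
def lcnt (E : ℤ → ℕ → ℤ) (z : ℤ) (k : ℕ) : ℕ :=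
  ((Finset.Icc 1 k).filter (fun j => E z j = -1)).card
lemma card_filter_range_succ (p : ℕ → Prop) [DecidablePred p] (n : ℕ) :
    ((Finset.range (n+1)).filter p).card
      = ((Finset.range n).filter p).card + if p n then 1 else 0 := by
  rw [Finset.range_add_one, Finset.filter_insert]
  split_ifs with h
  · rw [Finset.card_insert_of_notMem]; simp
  · rfl
lemma cntR_succ (X : ℕ → ℤ) (z : ℤ) (n : ℕ) :
    cntR X z (n+1) = cntR X z n + if X n = z ∧ X (n+1) = z + 1 then 1 else 0 :=
  card_filter_range_succ _ n
lemma cntL_succ (X : ℕ → ℤ) (z : ℤ) (n : ℕ) :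
    cntL X z (n+1) = cntL X z n + if X n = z + 1 ∧ X (n+1) = z then 1 else 0 :=
  card_filter_range_succ _ n
lemma dep_succ (X : ℕ → ℤ) (z : ℤ) (n : ℕ) :
    dep X z (n+1) = dep X z n + if X n = z then 1 else 0 :=
  card_filter_range_succ _ n
lemma rcnt_succ (E : ℤ → ℕ → ℤ) (z : ℤ) (k : ℕ) :
    rcnt E z (k+1) = rcnt E z k + if E z (k+1) = 1 then 1 else 0 := by
  unfold rcnt
  rw [show Finset.Icc 1 (k+1) = insert (k+1) (Finset.Icc 1 k) by
    ext j; simp [Finset.mem_Icc, Finset.mem_insert]; omega]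
  rw [Finset.filter_insert]
  split_ifs with h
  · rw [Finset.card_insert_of_notMem]; simp [Finset.mem_Icc]
  · rfl
lemma lcnt_succ (E : ℤ → ℕ → ℤ) (z : ℤ) (k : ℕ) :
    lcnt E z (k+1) = lcnt E z k + if E z (k+1) = -1 then 1 else 0 := by
  unfold lcnt
  rw [show Finset.Icc 1 (k+1) = insert (k+1) (Finset.Icc 1 k) by
    ext j; simp [Finset.mem_Icc, Finset.mem_insert]; omega]
  rw [Finset.filter_insert]
  split_ifs with h
  · rw [Finset.card_insert_of_notMem]; simp [Finset.mem_Icc]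
  · rfl
lemma rcnt_mono (E : ℤ → ℕ → ℤ) (z : ℤ) {k k' : ℕ} (h : k ≤ k') :
    rcnt E z k ≤ rcnt E z k' :=
  Finset.card_le_card (Finset.filter_subset_filter _ (Finset.Icc_subset_Icc_right h))
lemma lcnt_mono (E : ℤ → ℕ → ℤ) (z : ℤ) {k k' : ℕ} (h : k ≤ k') :
    lcnt E z k ≤ lcnt E z k' :=
  Finset.card_le_card (Finset.filter_subset_filter _ (Finset.Icc_subset_Icc_right h))

section Walk
variable {E : ℤ → ℕ → ℤ} {X : ℕ → ℤ}

lemma step_eq (hX : IsWalk E X) (n : ℕ) :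
    X (n+1) = X n + E (X n) (dep X (X n) n + 1) := by
  have h := hX.2 n
  have hv : visits X n (X n) = dep X (X n) n + 1 := by
    show ((Finset.range (n+1)).filter (fun m => X m = X n)).card = _
    rw [card_filter_range_succ]
    simp [dep]
  rwa [hv] at h

lemma step_cases (hA : IsArrow E) (hX : IsWalk E X) (n : ℕ) :
    X (n+1) = X n + 1 ∨ X (n+1) = X n - 1 := by
  have h := step_eq hX n
  rcases hA (X n) (dep X (X n) n + 1) with h1 | h1 <;> rw [h1] at h <;> omega

/-- departures split into right and left departures -/
lemma dep_split (hA : IsArrow E) (hX : IsWalk E X) (z : ℤ) (n : ℕ) :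
    dep X z n = cntR X z n + cntL X (z-1) n := by
  induction n with
  | zero => simp [dep, cntR, cntL]
  | succ n ih =>
    rw [dep_succ, cntR_succ, cntL_succ, ih]
    have h := step_cases hA hX n
    have hz : z - 1 + 1 = z := by ring
    rw [hz]
    split_ifs <;> omega

/-- conservation: departures = arrivals + start - current (ℤ form) -/
lemma dep_conserv (hA : IsArrow E) (hX : IsWalk E X) (z : ℤ) (n : ℕ) :
    (dep X z n : ℤ) = (if z = 0 then 1 else 0) + cntR X (z-1) n + cntL X z n
      - (if X n = z then 1 else 0) := by
  induction n with
  | zero =>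
    simp only [dep, cntR, cntL, Finset.range_zero, Finset.filter_empty, Finset.card_empty]
    have h0 := hX.1
    push_cast
    split_ifs <;> omega
  | succ n ih =>
    rw [dep_succ, cntR_succ, cntL_succ]
    have h := step_cases hA hX n
    have hz : z - 1 + 1 = z := by ring
    rw [hz]
    push_cast
    split_ifs at ih ⊢ <;> omega

/-- parity of crossings of edge (z,z+1) -/
lemma crossing_parity (hA : IsArrow E) (hX : IsWalk E X) (z : ℤ) (n : ℕ) :
    (cntR X z n : ℤ) - (cntL X z n : ℤ)
      = (if 0 ≤ z ∧ z < X n then 1 else 0) - (if X n ≤ z ∧ z < 0 then 1 else 0) := by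
  induction n with
  | zero =>
    simp only [cntR, cntL, Finset.range_zero, Finset.filter_empty, Finset.card_empty]
    have h0 := hX.1
    rw [h0]
    push_cast
    split_ifs <;> omega
  | succ n ih =>
    rw [cntR_succ, cntL_succ]
    have h := step_cases hA hX n
    push_cast
    split_ifs at ih ⊢ <;> omega

/-- right departures are given by the arrow counts -/
lemma cntR_eq_rcnt (hA : IsArrow E) (hX : IsWalk E X) (z : ℤ) (n : ℕ) :
    cntR X z n = rcnt E z (dep X z n) := by
  induction n with
  | zero => simp [cntR, dep, rcnt]
  | succ n ih =>
    rw [cntR_succ, dep_succ]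
    by_cases hy : X n = z
    · have hstep := step_eq hX n
      rw [hy] at hstep
      simp only [hy, if_pos trivial, if_true]
      rw [rcnt_succ, ih]
      rcases hA z (dep X z n + 1) with h1 | h1 <;> rw [h1] at hstep <;>
        simp [h1, hstep] <;> omega
    · simp [hy, ih]

lemma cntL_eq_lcnt (hA : IsArrow E) (hX : IsWalk E X) (z : ℤ) (n : ℕ) :
    cntL X (z-1) n = lcnt E z (dep X z n) := by
  induction n with
  | zero => simp [cntL, dep, lcnt]
  | succ n ih =>
    rw [cntL_succ, dep_succ]
    have hz : z - 1 + 1 = z := by ring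
    rw [hz]
    by_cases hy : X n = z
    · have hstep := step_eq hX n
      rw [hy] at hstep
      simp only [hy, if_true]
      rw [lcnt_succ, ih]
      rcases hA z (dep X z n + 1) with h1 | h1 <;> rw [h1] at hstep <;>
        simp [h1, hstep] <;> omega
    · simp [hy, ih]

lemma walk_bound (hA : IsArrow E) (hX : IsWalk E X) (n : ℕ) :
    -(n : ℤ) ≤ X n ∧ X n ≤ n := by
  induction n with
  | zero => simp [hX.1]
  | succ n ih =>
    have h := step_cases hA hX n
    push_cast
    omega

lemma walk_ivt (hA : IsArrow E) (hX : IsWalk E X) {x : ℤ} (hx : 0 ≤ x) :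
    ∀ n, x ≤ X n → ∃ m ≤ n, X m = x := by
  intro n
  induction n with
  | zero => intro h; exact ⟨0, le_refl 0, by have := hX.1; omega⟩
  | succ n ih =>
    intro h
    by_cases he : X (n+1) = x
    · exact ⟨n+1, le_refl _, he⟩
    · have hstep := step_cases hA hX n
      have : x ≤ X n := by omega
      obtain ⟨m, hm, hme⟩ := ih this
      exact ⟨m, le_trans hm (Nat.le_succ n), hme⟩

end Walk

section Cmp
variable {E L R : ℤ → ℕ → ℤ} {X : ℕ → ℤ}
lemma arrow_sum (hA : IsArrow E) (z : ℤ) (k : ℕ) :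
    (∑ j ∈ Finset.Icc 1 k, E z j) = (rcnt E z k : ℤ) - (lcnt E z k : ℤ)
      ∧ rcnt E z k + lcnt E z k = k := by
  induction k with
  | zero => simp [rcnt, lcnt]
  | succ k ih =>
    rw [show Finset.Icc 1 (k+1) = insert (k+1) (Finset.Icc 1 k) by
      ext j; simp [Finset.mem_Icc, Finset.mem_insert]; omega]
    rw [Finset.sum_insert (by simp [Finset.mem_Icc])]
    rw [rcnt_succ, lcnt_succ]
    obtain ⟨ih1, ih2⟩ := ih
    rcases hA z (k+1) with h | h <;> rw [h] <;> simp [h] <;> constructor <;> push_cast <;> omega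

lemma lcnt_le_lcnt (hLR : Prec L R) (hL : IsArrow L) (hR : IsArrow R) (z : ℤ) (k : ℕ) :
    lcnt R z k ≤ lcnt L z k := by
  obtain ⟨hL1, hL2⟩ := arrow_sum hL z k
  obtain ⟨hR1, hR2⟩ := arrow_sum hR z k
  have h := hLR z k
  rw [hL1, hR1] at h
  omega

lemma total_cross (hA : IsArrow E) (hX : IsWalk E X) (N n : ℕ) (hn : n ≤ N) :
    ∑ z ∈ Finset.Icc (-(N : ℤ)) (N : ℤ), (cntR X z n + cntL X z n) = n := by
  classical
  set f : ℕ → ℤ := fun m => if X (m+1) = X m + 1 then X m else X m - 1 with hf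
  have h1 : ∀ m ∈ Finset.range n, f m ∈ Finset.Icc (-(N : ℤ)) (N : ℤ) := by
    intro m hm
    simp only [Finset.mem_range] at hm
    have hb := walk_bound hA hX m
    simp only [Finset.mem_Icc, hf]
    split_ifs <;> omega
  have h2 := Finset.card_eq_sum_card_fiberwise h1
  rw [Finset.card_range] at h2
  have h3 : ∀ z ∈ Finset.Icc (-(N : ℤ)) (N : ℤ),
      cntR X z n + cntL X z n = ((Finset.range n).filter (fun m => f m = z)).card := by
    intro z _
    have hcong : (Finset.range n).filter (fun m => f m = z)
      = ((Finset.range n).filter (fun m => X m = z ∧ X (m+1) = z + 1))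
        ∪ ((Finset.range n).filter (fun m => X m = z + 1 ∧ X (m+1) = z)) := by
      rw [← Finset.filter_or]
      apply Finset.filter_congr
      intro m _
      have h := step_cases hA hX m
      simp only [hf]
      split_ifs with hd
      · constructor
        · intro h'; left; omega
        · intro h'; rcases h' with h' | h' <;> omega
      · constructor
        · intro h'; right; omega
        · intro h'; rcases h' with h' | h' <;> omega
    rw [hcong, Finset.card_union_of_disjoint]
    · rfl
    · rw [Finset.disjoint_left]
      intro m hm1 hm2
      simp only [Finset.mem_filter] at hm1 hm2
      omega
  rw [Finset.sum_congr rfl h3, ← h2]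
end Cmp

section Hit
variable {L R : ℤ → ℕ → ℤ} {XL XR : ℕ → ℤ}

lemma hit_compare (hL : IsArrow L) (hR : IsArrow R) (hLR : Prec L R)
    (hXL : IsWalk L XL) (hXR : IsWalk R XR)
    {x : ℤ} (hx : 0 ≤ x) {T : ℕ} (hT : XL T = x) :
    ∃ m ≤ T, XR m = x := by
  by_contra hcon
  push_neg at hcon
  have key : ∀ n, n ≤ T + 1 → ∀ z, cntR XR z n ≤ cntR XL z T ∧ cntL XR z n ≤ cntL XL z T := by
    intro n
    induction n with
    | zero => intro _ z; simp [cntR, cntL]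
    | succ n ih =>
      intro hn z
      have hnT : n ≤ T := by omega
      have hQ := ih (by omega)
      have hy : XR n ≠ x := hcon n hnT
      rcases step_cases hR hXR n with hs | hs
      · -- right step
        have hcl : cntL XR z (n+1) = cntL XR z n := by
          rw [cntL_succ, if_neg (by omega), add_zero]
        refine ⟨?_, by rw [hcl]; exact (hQ z).2⟩
        by_cases hz : XR n = z ∧ XR (n+1) = z + 1
        · obtain ⟨hz1, _⟩ := hz
          subst hz1
          rw [cntR_succ, if_pos ⟨rfl, hs⟩]
          -- need strict inequality: cntR XR (XR n) n < cntR XL (XR n) T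
          have hyx : XR n < x := by
            rcases lt_or_ge (XR n) x with h' | h'
            · exact h'
            · exfalso
              obtain ⟨m, hm, hmx⟩ := walk_ivt hR hXR hx n (by omega)
              exact hcon m (hm.trans hnT) hmx
          by_contra hsat
          push_neg at hsat
          have hsat' : cntR XR (XR n) n = cntR XL (XR n) T :=
            le_antisymm (hQ (XR n)).1 (by omega)
          have R1 := dep_split hR hXR (XR n) n
          have R2 := dep_conserv hR hXR (XR n) n
          rw [if_pos rfl] at R2
          have R3 := crossing_parity hR hXR (XR n - 1) n
          have L1 := dep_split hL hXL (XR n) T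
          have L2 := dep_conserv hL hXL (XR n) T
          rw [hT, if_neg (by omega : ¬ x = XR n)] at L2
          have L3 := crossing_parity hL hXL (XR n - 1) T
          rw [hT] at L3
          have hb1 := (hQ (XR n - 1)).1
          have hb2 := (hQ (XR n - 1)).2
          have hb3 := (hQ (XR n)).2
          split_ifs at R2 R3 L2 L3 <;> omega
        · rw [cntR_succ, if_neg hz, add_zero]
          exact (hQ z).1
      · -- left step
        have hcr : cntR XR z (n+1) = cntR XR z n := by
          rw [cntR_succ, if_neg (by omega), add_zero]
        refine ⟨by rw [hcr]; exact (hQ z).1, ?_⟩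
        by_cases hz : XR n = z + 1 ∧ XR (n+1) = z
        · obtain ⟨hz1, _⟩ := hz
          rw [cntL_succ, if_pos ⟨hz1, by omega⟩]
          by_contra hsat
          push_neg at hsat
          have hsat' : cntL XR z n = cntL XL z T :=
            le_antisymm (hQ z).2 (by omega)
          -- dep comparison at site z+1
          have R2 := dep_conserv hR hXR (z+1) n
          rw [if_pos hz1] at R2
          have L2 := dep_conserv hL hXL (z+1) T
          rw [hT, if_neg (by omega : ¬ x = z + 1)] at L2
          have e1 : z + 1 - 1 = z := by ring
          rw [e1] at R2 L2
          have hb1 := (hQ z).1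
          have hb2 := (hQ (z+1)).2
          have hdep : dep XR (z+1) n < dep XL (z+1) T := by
            split_ifs at R2 L2 <;> omega
          -- the left-arrow count contradiction
          have hlR := cntL_eq_lcnt hR hXR (z+1) n
          have hlL := cntL_eq_lcnt hL hXL (z+1) T
          rw [e1] at hlR hlL
          have harrow : R (z+1) (dep XR (z+1) n + 1) = -1 := by
            have hstep := step_eq hXR n
            rw [hz1] at hstep
            rcases hR (z+1) (dep XR (z+1) n + 1) with h1 | h1 <;> rw [h1] at hstep <;> omega
          have hstep2 : lcnt R (z+1) (dep XR (z+1) n + 1)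
              = lcnt R (z+1) (dep XR (z+1) n) + 1 := by
            rw [lcnt_succ, if_pos harrow]
          have hmono : lcnt R (z+1) (dep XR (z+1) n + 1) ≤ lcnt R (z+1) (dep XL (z+1) T) :=
            lcnt_mono R (z+1) (by omega)
          have hcomp := lcnt_le_lcnt hLR hL hR (z+1) (dep XL (z+1) T)
          omega
        · rw [cntL_succ, if_neg hz, add_zero]
          exact (hQ z).2
  -- budget argument
  have hbig := total_cross hR hXR (T+1) (T+1) le_rfl
  have hsmall := total_cross hL hXL (T+1) T (by omega)
  have hle : ∑ z ∈ Finset.Icc (-((T+1 : ℕ) : ℤ)) ((T+1 : ℕ) : ℤ), (cntR XR z (T+1) + cntL XR z (T+1))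
      ≤ ∑ z ∈ Finset.Icc (-((T+1 : ℕ) : ℤ)) ((T+1 : ℕ) : ℤ), (cntR XL z T + cntL XL z T) := by
    apply Finset.sum_le_sum
    intro z _
    have h := key (T+1) le_rfl z
    omega
  rw [hbig, hsmall] at hle
  omega

end Hit

end Stmt9

/-- If L ⪯ R and both walks have speeds v_L, v_R with v_L > 0, then
v_L ≤ v_R. -/
theorem stmt_9 (L R : ℤ → ℕ → ℤ) (hL : IsArrow L) (hR : IsArrow R) (hLR : Prec L R)
    (XL XR : ℕ → ℤ) (hXL : IsWalk L XL) (hXR : IsWalk R XR)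
    (vL vR : ℝ)
    (hvL : Tendsto (fun n => (XL n : ℝ) / (n : ℝ)) atTop (nhds vL))
    (hvR : Tendsto (fun n => (XR n : ℝ) / (n : ℝ)) atTop (nhds vR))
    (hpos : 0 < vL) :
    vL ≤ vR := by
  by_contra hlt
  push_neg at hlt
  set ε : ℝ := min ((vL - vR)/3) (vL/2) with hεdef
  have hε1 : ε ≤ (vL - vR)/3 := min_le_left _ _
  have hε2 : ε ≤ vL/2 := min_le_right _ _
  have hε0 : 0 < ε := lt_min (by linarith) (by linarith)
  have h1 : ∀ᶠ n : ℕ in atTop, vL - ε < (XL n : ℝ) / n :=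
    (tendsto_order.1 hvL).1 _ (by linarith)
  have h2 : ∀ᶠ n : ℕ in atTop, (XR n : ℝ) / n < vR + ε :=
    (tendsto_order.1 hvR).2 _ (by linarith)
  obtain ⟨N1, hN1⟩ := eventually_atTop.1 h1
  obtain ⟨N2, hN2⟩ := eventually_atTop.1 h2
  set K : ℝ := max (vR + ε) 0 with hKdef
  have hK0 : 0 ≤ K := le_max_right _ _
  have hKub : ∀ m : ℕ, (XR m : ℝ) ≤ K * m + N2 := by
    intro m
    rcases le_or_gt N2 m with hm | hm
    · rcases Nat.eq_zero_or_pos m with h0 | h0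
      · subst h0
        have h00 := hXR.1
        simp [h00]
      · have hmm := hN2 m hm
        have hmpos : (0:ℝ) < m := by exact_mod_cast h0
        rw [div_lt_iff₀ hmpos] at hmm
        have : (vR + ε) * m ≤ K * m :=
          mul_le_mul_of_nonneg_right (le_max_left _ _) (le_of_lt hmpos)
        have hN2' : (0:ℝ) ≤ N2 := Nat.cast_nonneg _
        linarith
    · have hb := (Stmt9.walk_bound hR hXR m).2
      have hb' : (XR m : ℝ) ≤ m := by exact_mod_cast hb
      have hmN : (m : ℝ) ≤ N2 := by exact_mod_cast hm.le
      nlinarith [mul_nonneg hK0 (Nat.cast_nonneg m : (0:ℝ) ≤ m)]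
  have hmain : ∀ n : ℕ, N1 ≤ n → 1 ≤ n → (vL - ε) * n ≤ K * n + N2 := by
    intro n hn hn1
    have hnpos : (0:ℝ) < n := by exact_mod_cast hn1
    have hXLn : (vL - ε) * n < XL n := by
      have := hN1 n hn
      rw [lt_div_iff₀ hnpos] at this
      linarith
    have hx0 : 0 ≤ XL n := by
      have hp : (0:ℝ) < (XL n : ℝ) := by nlinarith
      exact_mod_cast hp.le
    obtain ⟨m, hm, hmx⟩ := Stmt9.hit_compare hL hR hLR hXL hXR hx0 (rfl : XL n = XL n)
    have hub := hKub m
    rw [hmx] at hub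
    have hmn : (m : ℝ) ≤ n := by exact_mod_cast hm
    nlinarith
  have hc : 0 < vL - ε - K := by
    rcases max_choice (vR + ε) 0 with hK | hK <;> rw [hKdef, hK] <;> linarith
  obtain ⟨n, hn⟩ := exists_nat_gt ((N2 : ℝ) / (vL - ε - K) + N1 + 1)
  have hd0 : (0:ℝ) ≤ (N2 : ℝ) / (vL - ε - K) := div_nonneg (Nat.cast_nonneg _) hc.le
  have hnN1 : N1 ≤ n := by
    have : (N1 : ℝ) < n := by linarith
    exact_mod_cast this.le
  have hn1 : 1 ≤ n := by
    have : (1 : ℝ) ≤ n := by linarith [ (Nat.cast_nonneg N1 : (0:ℝ) ≤ N1) ]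
    exact_mod_cast this
  have h5 := hmain n hnN1 hn1
  have h6 : (N2 : ℝ) / (vL - ε - K) < n := by
    linarith [ (Nat.cast_nonneg N1 : (0:ℝ) ≤ N1) ]
  rw [div_lt_iff₀ hc] at h6
  nlinarith
end

section
/- Let ℰ be an arrow system whose walk E is transient to the right, let x be a regeneration point of E, and let ℰ' be any arrow system agreeing with ℰ at all sites y ≥ x. If the walk E' defined from ℰ' ever hits x, then x is a regeneration point of E' as well; i.e., whether a reachable point x is a regeneration point depends only on the arrows at sites ≥ x. -/
open Filter Topology

lemma before_hit_lt (E : ℤ → ℕ → ℤ) (X : ℕ → ℤ) (hE : IsArrow E) (hX : IsWalk E X)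
    (x : ℤ) (hx : 0 ≤ x) (T : ℕ) (hne : ∀ m < T, X m ≠ x) :
    ∀ m < T, X m < x := by
  intro m
  induction m with
  | zero =>
    intro h0
    have := hne 0 h0
    rw [hX.1] at this ⊢
    exact lt_of_le_of_ne hx this
  | succ m ih =>
    intro hm
    have hmlt : X m < x := ih (lt_trans (Nat.lt_succ_self m) hm)
    have hstep : E (X m) (visits X m (X m)) ≤ 1 := by
      rcases hE (X m) (visits X m (X m)) with h | h <;> simp [h]
    have hle : X (m + 1) ≤ x := by
      rw [hX.2 m]
      omega
    exact lt_of_le_of_ne hle (hne _ hm)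

lemma count_shift (P : ℕ → Prop) [DecidablePred P] (T n : ℕ) (h : ∀ m < T, ¬ P m) :
    ((Finset.range (T + n + 1)).filter P).card
      = ((Finset.range (n + 1)).filter (fun j => P (T + j))).card := by
  apply Finset.card_bij' (fun m _ => m - T) (fun j _ => T + j)
  · intro m hm
    simp only [Finset.mem_filter, Finset.mem_range] at hm ⊢
    have hTm : T ≤ m := by
      by_contra hc
      exact h m (by omega) hm.2
    constructor
    · omega
    · have : T + (m - T) = m := by omega
      rw [this]; exact hm.2
  · intro j hj
    simp only [Finset.mem_filter, Finset.mem_range] at hj ⊢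
    exact ⟨by omega, hj.2⟩
  · intro m hm
    simp only [Finset.mem_filter, Finset.mem_range] at hm
    have hTm : T ≤ m := by
      by_contra hc
      exact h m (by omega) hm.2
    omega
  · intro j hj
    omega

/-- If x is a regeneration point of the right-transient walk of ℰ,
and ℰ' agrees with ℰ at all sites y ≥ x, then x is a regeneration point of the
walk of ℰ' provided that walk ever hits x. -/
theorem stmt_12 (E E' : ℤ → ℕ → ℤ) (hE : IsArrow E) (hE' : IsArrow E')
    (X X' : ℕ → ℤ) (hX : IsWalk E X) (hX' : IsWalk E' X')
    (htrans : Tendsto X atTop atTop)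
    (x : ℤ) (hreg : Regen X x)
    (hagree : ∀ y : ℤ, ∀ k : ℕ, x ≤ y → E' y k = E y k)
    (hhit : ∃ m : ℕ, X' m = x) :
    Regen X' x := by

  obtain ⟨hx0, T, ⟨hXT, hne⟩, hafter⟩ := hreg
  -- first hitting time of x by X'
  set T' := Nat.find hhit with hT'def
  have hX'T' : X' T' = x := Nat.find_spec hhit
  have hne' : ∀ m < T', X' m ≠ x := fun m hm => Nat.find_min hhit hm
  have hbelow : ∀ m < T, X m < x := before_hit_lt E X hE hX x hx0 T hne
  have hbelow' : ∀ m < T', X' m < x := before_hit_lt E' X' hE' hX' x hx0 T' hne'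
  -- coupling
  have key : ∀ n, X' (T' + n) = X (T + n) := by
    intro n
    induction n using Nat.strong_induction_on with
    | _ n ih =>
      match n with
      | 0 => simpa [hX'T'] using hXT.symm
      | Nat.succ m =>
        have ihm := ih m (Nat.lt_succ_self m)
        have hxy : x ≤ X (T + m) := hafter (T + m) (Nat.le_add_right T m)
        have hvis : visits X' (T' + m) (X (T + m)) = visits X (T + m) (X (T + m)) := by
          unfold visits
          rw [count_shift (fun m' => X' m' = X (T + m)) T' m
            (fun m' hm' h => absurd h (ne_of_lt (lt_of_lt_of_le (hbelow' m' hm') hxy))),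
            count_shift (fun m' => X m' = X (T + m)) T m
            (fun m' hm' h => absurd h (ne_of_lt (lt_of_lt_of_le (hbelow m' hm') hxy)))]
          congr 1
          apply Finset.filter_congr
          intro j hj
          simp only [Finset.mem_range] at hj
          rw [ih j (by omega)]
        have h1 : X' (T' + (m + 1)) = X' (T' + m) + E' (X' (T' + m)) (visits X' (T' + m) (X' (T' + m))) := hX'.2 (T' + m)
        rw [h1, ihm, hvis, hagree _ _ hxy]
        exact (hX.2 (T + m)).symm
  refine ⟨hx0, T', ⟨hX'T', hne'⟩, ?_⟩
  intro n hn
  obtain ⟨j, rfl⟩ := Nat.exists_eq_add_of_le hn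
  rw [key j]
  exact hafter (T + j) (Nat.le_add_right T j)
end
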